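/- arXiv:2209.09889 — 6 statements merged into one kernel-verified Lean document; each statement's English description precedes it below -/
import Mathlib

section
/- The reduction map from the stabilizer of e₁ in Sp(2g, ℤ) to the stabilizer of e₁ in Sp(2g, ℤ/ℓℤ) is surjective. -/
/-!
An element of the stabilizer of `e₁` in `Sp(2g+2, S)` is determined by its block `C ∈ Sp(2g, S)`
on `⟨e₁, f₁⟩^⊥`, its column `u` at `f₁` and its entry `a` at `(e₁, f₁)`, and every such triple
occurs. Hence it lifts along a surjection `R → S` as soon as `C` does, and the theorem follows from
the surjectivity of `Sp(2g, ℤ) → Sp(2g, ℤ/ℓ)`.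

That surjectivity is proved by induction on `g`. Euclid's algorithm, run in each plane `⟨eᵢ, fᵢ⟩`
and then among the `eᵢ`, gives `A₁ ∈ Sp(2g, ℤ)` sending an integral lift of `B e₁` to some `m e₁`.
As `ω(B e₁, B f₁) = -1`, `m` is a unit mod `ℓ`, so a lift `P` of `diag(m, m⁻¹)` on `⟨e₁, f₁⟩`
gives `A = A₁⁻¹ P` with `A e₁ ≡ B e₁`. Then `Ā⁻¹ B` fixes `e₁` and lifts by the first step.
-/

open Matrix

/-- The first standard basis vector `e₁` of `R^{2g}` (indexed by `Fin g ⊕ Fin g`). -/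
def stdE1 (g : ℕ) (R : Type*) [Zero R] [One R] : (Fin g ⊕ Fin g) → R :=
  fun k => match k with
  | Sum.inl i => if (i : ℕ) = 0 then 1 else 0
  | Sum.inr _ => 0

section SymplecticForm

variable {l R : Type*} [Fintype l] [DecidableEq l] [CommRing R]

def symplecticForm (x y : l ⊕ l → R) : R := x ⬝ᵥ J l R *ᵥ y

theorem J_mulVec (y : l ⊕ l → R) :
    J l R *ᵥ y = Sum.elim (-(y ∘ Sum.inr)) (y ∘ Sum.inl) := by
  simp [J, fromBlocks_mulVec, neg_mulVec]

@[simp] theorem symplecticForm_zero_left (y : l ⊕ l → R) : symplecticForm 0 y = 0 := by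
  simp [symplecticForm]

@[simp] theorem symplecticForm_zero_right (x : l ⊕ l → R) : symplecticForm x 0 = 0 := by
  simp [symplecticForm]

theorem symplecticForm_single_inl (i : l) (y : l ⊕ l → R) :
    symplecticForm (Pi.single (Sum.inl i) 1) y = -y (Sum.inr i) := by
  simp [symplecticForm, single_dotProduct, J_mulVec]

theorem symplecticForm_smul_left (c : R) (x y : l ⊕ l → R) :
    symplecticForm (c • x) y = c * symplecticForm x y := by
  simp [symplecticForm, smul_dotProduct]

theorem symplecticForm_comm (x y : l ⊕ l → R) : symplecticForm x y = -symplecticForm y x := by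
  rw [symplecticForm, symplecticForm, dotProduct_mulVec, ← mulVec_transpose, J_transpose,
    neg_mulVec, neg_dotProduct, dotProduct_comm]

theorem symplecticForm_self (x : l ⊕ l → R) : symplecticForm x x = 0 := by
  simp [symplecticForm, J_mulVec, dotProduct, Fintype.sum_sum_type, mul_comm]

theorem symplecticForm_row (x : l ⊕ l → R) (A : Matrix (l ⊕ l) (l ⊕ l) R) (k : l ⊕ l) :
    symplecticForm x (A k) = -((A * J l R) *ᵥ x) k := by
  rw [symplecticForm_comm, ← mulVec_mulVec]
  rfl

theorem mem_symplecticGroup_iff_symplecticForm {A : Matrix (l ⊕ l) (l ⊕ l) R} :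
    A ∈ symplecticGroup l R ↔ ∀ k k', symplecticForm (A k) (A k') = J l R k k' := by
  simp only [SymplecticGroup.mem_iff, ← Matrix.ext_iff, mul_mul_apply, transpose_transpose,
    symplecticForm]

theorem symplecticForm_mulVec_mulVec {A : Matrix (l ⊕ l) (l ⊕ l) R}
    (hA : A ∈ symplecticGroup l R) (x y : l ⊕ l → R) :
    symplecticForm (A *ᵥ x) (A *ᵥ y) = symplecticForm x y := by
  rw [symplecticForm, symplecticForm, ← vecMul_transpose, ← dotProduct_mulVec, mulVec_mulVec,
    mulVec_mulVec, SymplecticGroup.mem_iff'.mp hA]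

theorem isUnit_of_mulVec_single_eq_smul {B : Matrix (l ⊕ l) (l ⊕ l) R}
    (hB : B ∈ symplecticGroup l R) {i : l} {c : R} {y : l ⊕ l → R}
    (h : B *ᵥ Pi.single (Sum.inl i) 1 = c • y) : IsUnit c := by
  have hω := symplecticForm_mulVec_mulVec hB (Pi.single (Sum.inl i) 1) (Pi.single (Sum.inr i) 1)
  rw [h, symplecticForm_smul_left, symplecticForm_single_inl, Pi.single_eq_same] at hω
  exact IsUnit.of_mul_eq_one (-symplecticForm y _) (by linear_combination -hω)

theorem row_inr_eq_single_of_mulVec_single {B : Matrix (l ⊕ l) (l ⊕ l) R}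
    (hB : B ∈ symplecticGroup l R) {i : l}
    (h : B *ᵥ Pi.single (Sum.inl i) 1 = Pi.single (Sum.inl i) 1) :
    B (Sum.inr i) = Pi.single (Sum.inr i) 1 := by
  ext k
  have hω := symplecticForm_mulVec_mulVec hB (Pi.single (Sum.inl i) 1) (Pi.single k 1)
  rw [h, symplecticForm_single_inl, symplecticForm_single_inl, mulVec_single_one] at hω
  simpa [Pi.single_apply, eq_comm] using hω

theorem eq_of_symplecticForm_rows_eq {C : Matrix (l ⊕ l) (l ⊕ l) R}
    (hC : C ∈ symplecticGroup l R) {x y : l ⊕ l → R}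
    (h : ∀ k, symplecticForm x (C k) = symplecticForm y (C k)) : x = y := by
  have hCJ : IsUnit (C * J l R).det := by
    rw [det_mul]
    exact (SymplecticGroup.symplectic_det hC).mul (isUnit_det_J l R)
  have hxy : (C * J l R) *ᵥ x = (C * J l R) *ᵥ y := by
    ext k
    simpa [symplecticForm_row] using h k
  simpa [mulVec_mulVec, nonsing_inv_mul _ hCJ] using congr((C * J l R)⁻¹ *ᵥ $hxy)

theorem symplecticForm_transpose_mulVec_J_mulVec {C : Matrix (l ⊕ l) (l ⊕ l) R}
    (hC : C ∈ symplecticGroup l R) (u : l ⊕ l → R) (k : l ⊕ l) :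
    symplecticForm (Cᵀ *ᵥ J l R *ᵥ u) (C k) = u k := by
  rw [symplecticForm_row, mulVec_mulVec, mulVec_mulVec, SymplecticGroup.mem_iff.mp hC, J_squared,
    neg_mulVec, one_mulVec, Pi.neg_apply, neg_neg]

end SymplecticForm

section BlockMatrices

variable {l R : Type*} [Fintype l] [DecidableEq l] [CommRing R]

theorem fromBlocks_diagonal_mem_symplecticGroup {a b c d : l → R}
    (h : ∀ i, a i * d i - b i * c i = 1) :
    fromBlocks (diagonal a) (diagonal b) (diagonal c) (diagonal d) ∈ symplecticGroup l R := by
  refine SymplecticGroup.fromBlocks_mem_iff.mpr ⟨?_, ?_, ?_⟩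
  · simp [mul_comm]
  · simp [mul_comm]
  · rw [← diagonal_one]
    simp only [diagonal_transpose, diagonal_mul_diagonal, diagonal_sub]
    congr with i
    linear_combination h i

theorem fromBlocks_transpose_inv_mem_symplecticGroup {M : Matrix l l R} (hM : IsUnit M.det) :
    fromBlocks M 0 0 (Mᵀ)⁻¹ ∈ symplecticGroup l R :=
  SymplecticGroup.fromBlocks_mem_iff.mpr
    ⟨by simp, by simp, by simp [mul_nonsing_inv _ (isUnit_det_transpose M hM)]⟩

theorem inv_mem_symplecticGroup {A : Matrix (l ⊕ l) (l ⊕ l) R}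
    (hA : A ∈ symplecticGroup l R) : A⁻¹ ∈ symplecticGroup l R := by
  rw [SymplecticGroup.inv_eq_symplectic_inv A hA]
  exact mul_mem (mul_mem (SymplecticGroup.neg_mem (SymplecticGroup.J_mem l R))
    (SymplecticGroup.transpose_mem hA)) (SymplecticGroup.J_mem l R)

def pairMatrix (i j : l) (a b c d : R) : Matrix l l R :=
  Matrix.of fun p => if p = i then Pi.single i a + Pi.single j b
    else if p = j then Pi.single i c + Pi.single j d else Pi.single p 1

theorem pairMatrix_mulVec (i j : l) (a b c d : R) (u : l → R) :
    pairMatrix i j a b c d *ᵥ u = fun p =>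
      if p = i then a * u i + b * u j else if p = j then c * u i + d * u j else u p := by
  ext p
  simp only [mulVec, pairMatrix, of_apply]
  split_ifs <;> simp [dotProduct, add_mul, Finset.sum_add_distrib, Pi.single_apply]

theorem isUnit_det_pairMatrix {i j : l} (hij : i ≠ j) {a b c d : R} (h : a * d - b * c = 1) :
    IsUnit (pairMatrix i j a b c d).det := by
  rw [← isUnit_iff_isUnit_det]
  refine IsUnit.of_mul_eq_one (pairMatrix i j d (-c) (-b) a)ᵀ ?_
  ext p q
  have hrow : (pairMatrix i j a b c d * (pairMatrix i j d (-c) (-b) a)ᵀ) p q =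
      (pairMatrix i j d (-c) (-b) a *ᵥ pairMatrix i j a b c d p) q := by
    simp only [mul_apply, transpose_apply, mulVec, dotProduct, mul_comm]
  rw [hrow, pairMatrix_mulVec]
  simp only [pairMatrix, of_apply, one_apply]
  split_ifs <;> subst_vars <;> simp_all [Ne.symm hij] <;>
    first | ring1 | linear_combination h

end BlockMatrices

section Reduction

variable {l R : Type*} [Fintype l] [DecidableEq l] [EuclideanDomain R] [GCDMonoid R]

theorem exists_det_eq_one_mul_add_mul_eq_zero (α β : R) :
    ∃ a b c d : R, a * d - b * c = 1 ∧ c * α + d * β = 0 := by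
  obtain ⟨c, d, ⟨u, v, huv⟩, h⟩ : ∃ c d : R, IsCoprime c d ∧ c * α + d * β = 0 := by
    by_cases hg : gcd α β = 0
    · obtain ⟨rfl, rfl⟩ := (gcd_eq_zero_iff α β).mp hg
      exact ⟨0, 1, isCoprime_one_right, by simp⟩
    · refine ⟨-(β / gcd α β), α / gcd α β,
        (isCoprime_div_gcd_div_gcd_of_gcd_ne_zero hg).symm.neg_left, ?_⟩
      have hβα : β / gcd α β * α = α * β / gcd α β := by
        rw [mul_comm, EuclideanDomain.mul_div_assoc _ (gcd_dvd_right α β)]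
      have hαβ : α / gcd α β * β = α * β / gcd α β := by
        rw [mul_comm, ← EuclideanDomain.mul_div_assoc _ (gcd_dvd_left α β), mul_comm]
      rw [neg_mul, hβα, hαβ, neg_add_cancel]
  exact ⟨v, -u, c, d, by linear_combination huv, h⟩

theorem exists_mem_symplecticGroup_mulVec_inr_eq_zero (x : l ⊕ l → R) :
    ∃ A ∈ symplecticGroup l R, ∀ i, (A *ᵥ x) (Sum.inr i) = 0 := by
  choose a b c d hdet hker using
    fun i => exists_det_eq_one_mul_add_mul_eq_zero (x (Sum.inl i)) (x (Sum.inr i))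
  refine ⟨_, fromBlocks_diagonal_mem_symplecticGroup hdet, fun i => ?_⟩
  simpa [fromBlocks_mulVec, mulVec_diagonal] using hker i

theorem exists_isUnit_det_mulVec_eq_zero (u : l → R) (i₀ : l) :
    ∃ M : Matrix l l R, IsUnit M.det ∧ ∀ k ≠ i₀, (M *ᵥ u) k = 0 := by
  suffices ∀ t : Finset l,
      ∃ M : Matrix l l R, IsUnit M.det ∧ ∀ k ∈ t, k ≠ i₀ → (M *ᵥ u) k = 0 by
    obtain ⟨M, hM, h⟩ := this Finset.univ
    exact ⟨M, hM, fun k => h k (Finset.mem_univ k)⟩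
  intro t
  induction t using Finset.induction_on with
  | empty => exact ⟨1, by simp, by simp⟩
  | insert j t _ ih =>
    obtain ⟨M, hM, hMu⟩ := ih
    by_cases hj : j = i₀
    · refine ⟨M, hM, fun k hk hk₀ => hMu k ?_ hk₀⟩
      exact (Finset.mem_insert.mp hk).resolve_left (by rintro rfl; exact hk₀ hj)
    obtain ⟨a, b, c, d, hdet, hker⟩ :=
      exists_det_eq_one_mul_add_mul_eq_zero ((M *ᵥ u) i₀) ((M *ᵥ u) j)
    refine ⟨pairMatrix i₀ j a b c d * M, ?_, fun k hk hk₀ => ?_⟩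
    · rw [det_mul]
      exact (isUnit_det_pairMatrix (Ne.symm hj) hdet).mul hM
    rw [← mulVec_mulVec, pairMatrix_mulVec]
    simp only [if_neg hk₀]
    split_ifs with hkj
    · exact hker
    · exact hMu k ((Finset.mem_insert.mp hk).resolve_left hkj) hk₀

theorem exists_mem_symplecticGroup_mulVec_eq_single (x : l ⊕ l → R) (i₀ : l) :
    ∃ A ∈ symplecticGroup l R, ∃ m : R, A *ᵥ x = Pi.single (Sum.inl i₀) m := by
  obtain ⟨A, hA, hAx⟩ := exists_mem_symplecticGroup_mulVec_inr_eq_zero x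
  obtain ⟨M, hM, hMx⟩ := exists_isUnit_det_mulVec_eq_zero ((A *ᵥ x) ∘ Sum.inl) i₀
  refine ⟨_, mul_mem (fromBlocks_transpose_inv_mem_symplecticGroup hM) hA,
    (M *ᵥ ((A *ᵥ x) ∘ Sum.inl)) i₀, ?_⟩
  have hinr : (A *ᵥ x) ∘ Sum.inr = 0 := funext hAx
  ext (k | k)
  · by_cases hk : k = i₀
    · simp [← mulVec_mulVec, fromBlocks_mulVec, hinr, hk]
    · simp [← mulVec_mulVec, fromBlocks_mulVec, hinr, hk, hMx k hk]
  · simp [← mulVec_mulVec, fromBlocks_mulVec, hinr]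

end Reduction

section Stabilizer

variable {g : ℕ}

/-- Splits the coordinates of `R^{2g+2}` into the hyperbolic plane `⟨e₁, f₁⟩` (indices `inl 0`,
`inr 0`) and its complement, identified with `R^{2g}` through `Sum.map Fin.succ Fin.succ`. -/
def consPair {α : Type*} (x y : α) (v : Fin g ⊕ Fin g → α) :
    Fin (g + 1) ⊕ Fin (g + 1) → α :=
  Sum.elim (Fin.cons x (v ∘ Sum.inl)) (Fin.cons y (v ∘ Sum.inr))

section ConsPair

variable {α : Type*} (x y : α) (v : Fin g ⊕ Fin g → α)

@[simp] theorem consPair_inl_zero : consPair x y v (Sum.inl 0) = x := rfl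

@[simp] theorem consPair_inr_zero : consPair x y v (Sum.inr 0) = y := rfl

@[simp] theorem consPair_inl_succ (i : Fin g) : consPair x y v (Sum.inl i.succ) = v (Sum.inl i) :=
  rfl

@[simp] theorem consPair_inr_succ (i : Fin g) : consPair x y v (Sum.inr i.succ) = v (Sum.inr i) :=
  rfl

@[simp] theorem consPair_map_succ (k : Fin g ⊕ Fin g) :
    consPair x y v (Sum.map Fin.succ Fin.succ k) = v k := by
  cases k <;> rfl

theorem forall_index_succ_iff {P : Fin (g + 1) ⊕ Fin (g + 1) → Prop} :
    (∀ k, P k) ↔ P (Sum.inl 0) ∧ P (Sum.inr 0) ∧ ∀ k, P (Sum.map Fin.succ Fin.succ k) := by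
  refine ⟨fun h => ⟨h _, h _, fun k => h _⟩, fun ⟨h₀, h₁, h⟩ k => ?_⟩
  rcases k with i | i <;> cases i using Fin.cases
  exacts [h₀, h (Sum.inl _), h₁, h (Sum.inr _)]

theorem consPair_eta (w : Fin (g + 1) ⊕ Fin (g + 1) → α) :
    consPair (w (Sum.inl 0)) (w (Sum.inr 0)) (w ∘ Sum.map Fin.succ Fin.succ) = w := by
  funext k
  revert k
  rw [forall_index_succ_iff]
  simp

end ConsPair

variable {R : Type*} [CommRing R]

theorem single_inl_zero_eq_consPair :
    (Pi.single (Sum.inl 0) 1 : Fin (g + 1) ⊕ Fin (g + 1) → R) = consPair 1 0 0 := by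
  funext k
  revert k
  rw [forall_index_succ_iff]
  refine ⟨by simp, by simp, fun k => ?_⟩
  cases k <;> simp [Fin.succ_ne_zero]

theorem single_inr_zero_eq_consPair :
    (Pi.single (Sum.inr 0) 1 : Fin (g + 1) ⊕ Fin (g + 1) → R) = consPair 0 1 0 := by
  funext k
  revert k
  rw [forall_index_succ_iff]
  refine ⟨by simp, by simp, fun k => ?_⟩
  cases k <;> simp [Fin.succ_ne_zero]

theorem J_mulVec_consPair (x y : R) (v : Fin g ⊕ Fin g → R) :
    J (Fin (g + 1)) R *ᵥ consPair x y v = consPair (-y) x (J (Fin g) R *ᵥ v) := by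
  funext k
  revert k
  rw [forall_index_succ_iff]
  refine ⟨by simp [J_mulVec], by simp [J_mulVec], fun k => ?_⟩
  cases k <;> simp [J_mulVec]

theorem consPair_dotProduct (x y x' y' : R) (v v' : Fin g ⊕ Fin g → R) :
    consPair x y v ⬝ᵥ consPair x' y' v' = x * x' + y * y' + v ⬝ᵥ v' := by
  simp only [dotProduct, Fintype.sum_sum_type, Fin.sum_univ_succ, consPair_inl_zero,
    consPair_inr_zero, consPair_inl_succ, consPair_inr_succ]
  ring

theorem symplecticForm_consPair (x y x' y' : R) (v v' : Fin g ⊕ Fin g → R) :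
    symplecticForm (consPair x y v) (consPair x' y' v') =
      y * x' - x * y' + symplecticForm v v' := by
  rw [symplecticForm, J_mulVec_consPair, consPair_dotProduct, symplecticForm]
  ring

theorem J_succ : J (Fin (g + 1)) R =
    consPair (consPair 0 (-1) 0) (consPair 1 0 0) fun k => consPair 0 0 (J (Fin g) R k) := by
  ext k k'
  revert k k'
  simp only [forall_index_succ_iff]
  refine ⟨⟨?_, ?_, ?_⟩, ⟨?_, ?_, ?_⟩, fun k => ⟨?_, ?_, fun k' => ?_⟩⟩ <;>
    (try cases k) <;> (try cases k') <;> simp [J, one_apply, (Fin.succ_ne_zero _).symm]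

theorem mem_symplecticGroup_iff_of_rows {a : R} {ρ u : Fin g ⊕ Fin g → R}
    {C : Matrix (Fin g ⊕ Fin g) (Fin g ⊕ Fin g) R}
    {B : Matrix (Fin (g + 1) ⊕ Fin (g + 1)) (Fin (g + 1) ⊕ Fin (g + 1)) R}
    (h₀ : B (Sum.inl 0) = consPair 1 a ρ) (h₁ : B (Sum.inr 0) = consPair 0 1 0)
    (h : ∀ k, B (Sum.map Fin.succ Fin.succ k) = consPair 0 (u k) (C k)) :
    B ∈ symplecticGroup (Fin (g + 1)) R ↔
      C ∈ symplecticGroup (Fin g) R ∧ ∀ k, symplecticForm ρ (C k) = u k := by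
  simp only [mem_symplecticGroup_iff_symplecticForm, J_succ, forall_index_succ_iff, h₀, h₁, h,
    consPair_inl_zero, consPair_inr_zero, consPair_map_succ, symplecticForm_consPair,
    symplecticForm_self, symplecticForm_zero_left, symplecticForm_zero_right,
    symplecticForm_comm (C _) ρ, Pi.zero_apply]
  constructor
  · rintro ⟨⟨-, -, hρ⟩, -, hC⟩
    exact ⟨fun k k' => by linear_combination (hC k).2.2 k', fun k => by linear_combination hρ k⟩
  · rintro ⟨hC, hρ⟩
    exact ⟨⟨trivial, by ring, fun k => by linear_combination hρ k⟩,
      ⟨by ring, trivial, fun k => by ring⟩,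
      fun k => ⟨by linear_combination -hρ k, by ring, fun k' => by linear_combination hC k k'⟩⟩

/-- The general element of the stabilizer of `e₁` (`eq_stabilizerMatrix`), given by rows. Its
`e₁`-row `Cᵀ J u` is the solution of `ω(ρ, C k) = u k` forced by `mem_symplecticGroup_iff_of_rows`,
which leaves `a`, `u` and `C` as free parameters. -/
def stabilizerMatrix (a : R) (u : Fin g ⊕ Fin g → R)
    (C : Matrix (Fin g ⊕ Fin g) (Fin g ⊕ Fin g) R) :
    Matrix (Fin (g + 1) ⊕ Fin (g + 1)) (Fin (g + 1) ⊕ Fin (g + 1)) R :=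
  consPair (consPair 1 a (Cᵀ *ᵥ J (Fin g) R *ᵥ u)) (consPair 0 1 0) fun k =>
    consPair 0 (u k) (C k)

section StabilizerMatrix

variable (a : R) (u : Fin g ⊕ Fin g → R) (C : Matrix (Fin g ⊕ Fin g) (Fin g ⊕ Fin g) R)

@[simp] theorem stabilizerMatrix_inl_zero :
    stabilizerMatrix a u C (Sum.inl 0) = consPair 1 a (Cᵀ *ᵥ J (Fin g) R *ᵥ u) := rfl

@[simp] theorem stabilizerMatrix_inr_zero : stabilizerMatrix a u C (Sum.inr 0) = consPair 0 1 0 :=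
  rfl

@[simp] theorem stabilizerMatrix_map_succ (k : Fin g ⊕ Fin g) :
    stabilizerMatrix a u C (Sum.map Fin.succ Fin.succ k) = consPair 0 (u k) (C k) :=
  consPair_map_succ _ _ _ k

end StabilizerMatrix

theorem stabilizerMatrix_mem {a : R} {u : Fin g ⊕ Fin g → R}
    {C : Matrix (Fin g ⊕ Fin g) (Fin g ⊕ Fin g) R} (hC : C ∈ symplecticGroup (Fin g) R) :
    stabilizerMatrix a u C ∈ symplecticGroup (Fin (g + 1)) R :=
  (mem_symplecticGroup_iff_of_rows rfl rfl (stabilizerMatrix_map_succ a u C)).mpr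
    ⟨hC, symplecticForm_transpose_mulVec_J_mulVec hC u⟩

theorem stabilizerMatrix_mulVec_single (a : R) (u : Fin g ⊕ Fin g → R)
    (C : Matrix (Fin g ⊕ Fin g) (Fin g ⊕ Fin g) R) :
    stabilizerMatrix a u C *ᵥ Pi.single (Sum.inl 0) 1 = Pi.single (Sum.inl 0) 1 := by
  rw [mulVec_single_one, single_inl_zero_eq_consPair]
  funext k
  revert k
  rw [forall_index_succ_iff]
  simp [-Sum.forall]

theorem stabilizerMatrix_map {S : Type*} [CommRing S] (f : R →+* S) (a : R)
    (u : Fin g ⊕ Fin g → R) (C : Matrix (Fin g ⊕ Fin g) (Fin g ⊕ Fin g) R) :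
    (stabilizerMatrix a u C).map f = stabilizerMatrix (f a) (f ∘ u) (C.map f) := by
  ext k k'
  revert k k'
  simp only [forall_index_succ_iff]
  simp [-Sum.forall, RingHom.map_mulVec, Matrix.map_mul, transpose_map]

theorem eq_stabilizerMatrix
    {B : Matrix (Fin (g + 1) ⊕ Fin (g + 1)) (Fin (g + 1) ⊕ Fin (g + 1)) R}
    (hB : B ∈ symplecticGroup (Fin (g + 1)) R)
    (hBe : B *ᵥ Pi.single (Sum.inl 0) 1 = Pi.single (Sum.inl 0) 1) :
    B.submatrix (Sum.map Fin.succ Fin.succ) (Sum.map Fin.succ Fin.succ) ∈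
        symplecticGroup (Fin g) R ∧
      B = stabilizerMatrix (B (Sum.inl 0) (Sum.inr 0))
        (fun k => B (Sum.map Fin.succ Fin.succ k) (Sum.inr 0))
        (B.submatrix (Sum.map Fin.succ Fin.succ) (Sum.map Fin.succ Fin.succ)) := by
  set C := B.submatrix (Sum.map Fin.succ Fin.succ) (Sum.map Fin.succ Fin.succ)
  set u := fun k => B (Sum.map Fin.succ Fin.succ k) (Sum.inr 0)
  set ρ := fun k => B (Sum.inl 0) (Sum.map Fin.succ Fin.succ k)
  have hcol : ∀ k, B k (Sum.inl 0) = consPair 1 0 0 k := by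
    intro k
    rw [← single_inl_zero_eq_consPair, ← hBe, mulVec_single_one]
    rfl
  have h₀ : B (Sum.inl 0) = consPair 1 (B (Sum.inl 0) (Sum.inr 0)) ρ := by
    rw [← consPair_eta (B (Sum.inl 0)), hcol]
    rfl
  have h₁ : B (Sum.inr 0) = consPair 0 1 0 := by
    rw [row_inr_eq_single_of_mulVec_single hB hBe, single_inr_zero_eq_consPair]
  have h : ∀ k, B (Sum.map Fin.succ Fin.succ k) = consPair 0 (u k) (C k) := by
    intro k
    rw [← consPair_eta (B (Sum.map Fin.succ Fin.succ k)), hcol, consPair_map_succ]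
    rfl
  obtain ⟨hC, hρ⟩ := (mem_symplecticGroup_iff_of_rows h₀ h₁ h).mp hB
  have hρC : ρ = Cᵀ *ᵥ J (Fin g) R *ᵥ u := eq_of_symplecticForm_rows_eq hC fun k =>
    (hρ k).trans (symplecticForm_transpose_mulVec_J_mulVec hC u k).symm
  refine ⟨hC, funext fun k => ?_⟩
  revert k
  rw [forall_index_succ_iff]
  exact ⟨by rw [h₀, hρC]; rfl, h₁, fun k => by rw [h, stabilizerMatrix_map_succ]⟩

theorem exists_mem_map_eq_of_mulVec_single_eq {S : Type*} [CommRing S] {f : R →+* S}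
    (hf : Function.Surjective f)
    (hlift : ∀ C ∈ symplecticGroup (Fin g) S, ∃ D ∈ symplecticGroup (Fin g) R, D.map f = C)
    {B : Matrix (Fin (g + 1) ⊕ Fin (g + 1)) (Fin (g + 1) ⊕ Fin (g + 1)) S}
    (hB : B ∈ symplecticGroup (Fin (g + 1)) S)
    (hBe : B *ᵥ Pi.single (Sum.inl 0) 1 = Pi.single (Sum.inl 0) 1) :
    ∃ A ∈ symplecticGroup (Fin (g + 1)) R,
      A *ᵥ Pi.single (Sum.inl 0) 1 = Pi.single (Sum.inl 0) 1 ∧ A.map f = B := by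
  obtain ⟨hC, hBeq⟩ := eq_stabilizerMatrix hB hBe
  obtain ⟨D, hD, hDC⟩ := hlift _ hC
  obtain ⟨a, ha⟩ := hf (B (Sum.inl 0) (Sum.inr 0))
  choose u hu using fun k => hf (B (Sum.map Fin.succ Fin.succ k) (Sum.inr 0))
  refine ⟨stabilizerMatrix a u D, stabilizerMatrix_mem hD,
    stabilizerMatrix_mulVec_single a u D, ?_⟩
  rw [stabilizerMatrix_map, ha, hDC, show f ∘ u = _ from funext hu]
  exact hBeq.symm

end Stabilizer

section ReductionModN

variable {l : Type*} [Fintype l] [DecidableEq l] {n : ℕ}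

/-- `P` acts on the plane `⟨e_i, f_i⟩` by `!![m, t; n, s]`, an integral lift of `diag(m, m⁻¹)`. -/
theorem exists_mem_map_mulVec_single_eq_smul {m : ℤ} (hm : IsUnit (m : ZMod n)) (i : l) :
    ∃ P ∈ symplecticGroup l ℤ, P.map (Int.castRingHom (ZMod n)) *ᵥ Pi.single (Sum.inl i) 1 =
      (m : ZMod n) • Pi.single (Sum.inl i) 1 := by
  obtain ⟨s, t, hst⟩ : ∃ s t : ℤ, m * s - t * n = 1 := by
    obtain ⟨v, hv⟩ := hm.exists_right_inv
    have hdvd : ((m * v.cast - 1 : ℤ) : ZMod n) = 0 := by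
      push_cast [ZMod.intCast_zmod_cast, hv]
      ring
    obtain ⟨t, ht⟩ := (ZMod.intCast_zmod_eq_zero_iff_dvd _ _).mp hdvd
    exact ⟨v.cast, t, by linear_combination ht⟩
  refine ⟨fromBlocks (diagonal (Function.update 1 i m)) (diagonal (Pi.single i t))
    (diagonal (Pi.single i n)) (diagonal (Function.update 1 i s)),
    fromBlocks_diagonal_mem_symplecticGroup ?_, ?_⟩
  · intro k
    by_cases hk : k = i
    · subst hk
      simpa using hst
    · simp [hk]
  · ext (k | k) <;> by_cases hk : k = i <;> simp [hk]

theorem exists_mem_map_mulVec_single_eq {B : Matrix (l ⊕ l) (l ⊕ l) (ZMod n)}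
    (hB : B ∈ symplecticGroup l (ZMod n)) (i : l) :
    ∃ A ∈ symplecticGroup l ℤ, A.map (Int.castRingHom (ZMod n)) *ᵥ Pi.single (Sum.inl i) 1 =
      B *ᵥ Pi.single (Sum.inl i) 1 := by
  set f := Int.castRingHom (ZMod n)
  obtain ⟨x, hx⟩ : ∃ x : l ⊕ l → ℤ, f ∘ x = B *ᵥ Pi.single (Sum.inl i) 1 :=
    ⟨fun k => ((B *ᵥ Pi.single (Sum.inl i) 1) k).cast, funext fun k => ZMod.intCast_zmod_cast _⟩
  obtain ⟨A₁, hA₁, m, hA₁x⟩ := exists_mem_symplecticGroup_mulVec_eq_single x i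
  have hBe : B *ᵥ Pi.single (Sum.inl i) 1 = f m • (A₁⁻¹.map f *ᵥ Pi.single (Sum.inl i) 1) := by
    have hx' : x = A₁⁻¹ *ᵥ Pi.single (Sum.inl i) m := by
      rw [← hA₁x, mulVec_mulVec, nonsing_inv_mul _ (SymplecticGroup.symplectic_det hA₁),
        one_mulVec]
    have hm : f ∘ Pi.single (Sum.inl i : l ⊕ l) m = f m • Pi.single (Sum.inl i) 1 := by
      ext k
      simp [Pi.single_apply, apply_ite f]
    rw [← hx, hx', ← mulVec_smul, ← hm]
    ext k
    exact RingHom.map_mulVec f _ _ k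
  obtain ⟨P, hP, hPe⟩ :=
    exists_mem_map_mulVec_single_eq_smul (isUnit_of_mulVec_single_eq_smul hB hBe) i
  refine ⟨A₁⁻¹ * P, mul_mem (inv_mem_symplecticGroup hA₁) hP, ?_⟩
  rw [Matrix.map_mul, ← mulVec_mulVec, hPe, mulVec_smul]
  exact hBe.symm

theorem exists_mem_symplecticGroup_int_map_eq (n g : ℕ) :
    ∀ B ∈ symplecticGroup (Fin g) (ZMod n),
      ∃ A ∈ symplecticGroup (Fin g) ℤ, A.map (Int.castRingHom (ZMod n)) = B := by
  induction g with
  | zero => exact fun B _ => ⟨1, one_mem _, Subsingleton.elim _ _⟩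
  | succ g ih =>
    intro B hB
    set f := Int.castRingHom (ZMod n)
    obtain ⟨A, hA, hAB⟩ := exists_mem_map_mulVec_single_eq hB 0
    have hAf := SymplecticGroup.symplectic_det (SymplecticGroup.map_mem hA f)
    obtain ⟨D, hD, -, hDB⟩ :=
      exists_mem_map_eq_of_mulVec_single_eq (f := f) ZMod.intCast_surjective ih
        (mul_mem (inv_mem_symplecticGroup (SymplecticGroup.map_mem hA f)) hB)
        (by rw [← mulVec_mulVec, ← hAB, mulVec_mulVec, nonsing_inv_mul _ hAf, one_mulVec])
    refine ⟨A * D, mul_mem hA hD, ?_⟩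
    rw [Matrix.map_mul, hDB, ← Matrix.mul_assoc, mul_nonsing_inv _ hAf, Matrix.one_mul]

end ReductionModN

theorem stdE1_succ (g : ℕ) (R : Type*) [Zero R] [One R] :
    stdE1 (g + 1) R = Pi.single (Sum.inl 0) 1 := by
  funext k
  rcases k with i | i <;> simp [stdE1, Pi.single_apply]

theorem stabilizer_reduction_surjective_general (g ℓ : ℕ)
    (B : Matrix (Fin g ⊕ Fin g) (Fin g ⊕ Fin g) (ZMod ℓ))
    (hB : B ∈ Matrix.symplecticGroup (Fin g) (ZMod ℓ))
    (hBe : B.mulVec (stdE1 g (ZMod ℓ)) = stdE1 g (ZMod ℓ)) :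
    ∃ A : Matrix (Fin g ⊕ Fin g) (Fin g ⊕ Fin g) ℤ,
      A ∈ Matrix.symplecticGroup (Fin g) ℤ ∧
      A.mulVec (stdE1 g ℤ) = stdE1 g ℤ ∧
      A.map (Int.cast : ℤ → ZMod ℓ) = B := by
  cases g with
  | zero => exact ⟨1, one_mem _, Subsingleton.elim _ _, Subsingleton.elim _ _⟩
  | succ g =>
    rw [stdE1_succ] at hBe ⊢
    exact exists_mem_map_eq_of_mulVec_single_eq ZMod.intCast_surjective
      (exists_mem_symplecticGroup_int_map_eq ℓ g) hB hBe

theorem stabilizer_reduction_surjective (g ℓ : ℕ) (hg : 0 < g) (hℓ : 0 < ℓ)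
    (B : Matrix (Fin g ⊕ Fin g) (Fin g ⊕ Fin g) (ZMod ℓ))
    (hB : B ∈ Matrix.symplecticGroup (Fin g) (ZMod ℓ))
    (hBe : B.mulVec (stdE1 g (ZMod ℓ)) = stdE1 g (ZMod ℓ)) :
    ∃ A : Matrix (Fin g ⊕ Fin g) (Fin g ⊕ Fin g) ℤ,
      A ∈ Matrix.symplecticGroup (Fin g) ℤ ∧
      A.mulVec (stdE1 g ℤ) = stdE1 g ℤ ∧
      A.map (Int.cast : ℤ → ZMod ℓ) = B :=
  stabilizer_reduction_surjective_general g ℓ B hB hBe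
end

section
/- If gcd(ℓ, m) = 1, then B_n[ℓ] · B_n[m] = B_n, i.e., every braid is a product of an element of the level-ℓ congruence subgroup and an element of the level-m congruence subgroup. -/
open Matrix FreeGroup

/-- The braid relations on `n` strands, with Artin generators indexed by `Fin (n-1)`. -/
def braidRels (n : ℕ) : Set (FreeGroup (Fin (n - 1))) :=
  {r | (∃ i j : Fin (n - 1), (i : ℕ) + 1 = (j : ℕ) ∧
          r = of i * of j * of i * (of j * of i * of j)⁻¹) ∨
       (∃ i j : Fin (n - 1), (i : ℕ) + 2 ≤ (j : ℕ) ∧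
          r = of i * of j * (of j * of i)⁻¹)}

/-- The braid group on `n` strands, as a presented group. -/
def BraidGroup (n : ℕ) : Type := PresentedGroup (braidRels n)

instance (n : ℕ) : Group (BraidGroup n) := by unfold BraidGroup; infer_instance

/-- The Artin generator `σ_{i+1}` of the braid group on `n` strands. -/
def σ {n : ℕ} (i : Fin (n - 1)) : BraidGroup n := PresentedGroup.of i

/-- The integral Burau matrix of the Artin generator `σ_{i+1}` (rows and columns `i`, `i+1`
in 0-indexed notation): the identity matrix with the block `[[2, -1], [1, 0]]` inserted. -/
def burauMat (n : ℕ) (i : ℕ) : Matrix (Fin n) (Fin n) ℤ :=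
  Matrix.of fun j k =>
    if (j : ℕ) = i ∧ (k : ℕ) = i then 2
    else if (j : ℕ) = i ∧ (k : ℕ) = i + 1 then -1
    else if (j : ℕ) = i + 1 ∧ (k : ℕ) = i then 1
    else if (j : ℕ) = i + 1 ∧ (k : ℕ) = i + 1 then 0
    else if j = k then 1 else 0

/-- `IsBurau ρ` asserts that `ρ` is the integral Burau representation (Burau at `t = -1`). -/
def IsBurau {n : ℕ} (ρ : BraidGroup n →* Matrix.GeneralLinearGroup (Fin n) ℤ) : Prop :=
  ∀ i : Fin (n - 1), (ρ (σ i) : Matrix (Fin n) (Fin n) ℤ) = burauMat n (i : ℕ)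

/-- Reduction modulo `ℓ` on `GL(n, ℤ)`. -/
def glMod (n ℓ : ℕ) :
    Matrix.GeneralLinearGroup (Fin n) ℤ →* Matrix.GeneralLinearGroup (Fin n) (ZMod ℓ) :=
  Units.map ((Int.castRingHom (ZMod ℓ)).mapMatrix.toMonoidHom)

/-- The level-`ℓ` congruence subgroup `B_n[ℓ]` of the braid group: the kernel of the
integral Burau representation reduced mod `ℓ`. -/
def braidCong {n : ℕ} (ρ : BraidGroup n →* Matrix.GeneralLinearGroup (Fin n) ℤ) (ℓ : ℕ) :
    Subgroup (BraidGroup n) :=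
  ((glMod n ℓ).comp ρ).ker

instance braidCong_normal {n : ℕ} (ρ : BraidGroup n →* Matrix.GeneralLinearGroup (Fin n) ℤ)
    (ℓ : ℕ) : (braidCong ρ ℓ).Normal :=
  MonoidHom.normal_ker _

/-! The Burau matrix of `σ_i` is `1 + u vᵀ` with `v ⬝ᵥ u = 0`, so its `k`-th power is
`1 + k u vᵀ ≡ 1 (mod k)` and `σ_i^k ∈ B_n[k]`. By Bézout, `aℓ + bm = 1` gives
`σ_i = (σ_i^ℓ)^a (σ_i^m)^b ∈ B_n[ℓ] ⊔ B_n[m]`, which is the product set as both subgroups are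
normal; and the `σ_i` generate `B_n`. -/

theorem one_add_pow_of_mul_self_eq_zero {A : Type*} [Semiring A] {N : A} (hN : N * N = 0)
    (k : ℕ) : (1 + N) ^ k = 1 + k * N := by
  induction k with
  | zero => simp
  | succ k ih =>
    rw [pow_succ, ih]
    simp only [add_mul, mul_add, one_mul, mul_one, mul_assoc, hN, mul_zero, add_zero,
      Nat.cast_succ]
    abel

theorem Subgroup.mem_sup_of_pow_mem_of_coprime {G : Type*} [Group G] {H K : Subgroup G} {g : G}
    {ℓ m : ℕ} (h : ℓ.Coprime m) (hH : g ^ ℓ ∈ H) (hK : g ^ m ∈ K) : g ∈ H ⊔ K := by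
  obtain ⟨a, b, hab⟩ : IsCoprime (ℓ : ℤ) m := Nat.isCoprime_iff_coprime.mpr h
  have hg : g = (g ^ ℓ) ^ a * (g ^ m) ^ b := by
    rw [← zpow_natCast, ← zpow_natCast, ← _root_.zpow_mul, ← _root_.zpow_mul, ← _root_.zpow_add,
      mul_comm, mul_comm (m : ℤ), hab, zpow_one]
  rw [hg]
  exact mul_mem (mem_sup_left (zpow_mem hH a)) (mem_sup_right (zpow_mem hK b))

def burauCol (n i : ℕ) : Fin n → ℤ := fun j => if (j : ℕ) = i ∨ (j : ℕ) = i + 1 then 1 else 0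

def burauRow (n i : ℕ) : Fin n → ℤ := fun k =>
  if (k : ℕ) = i then 1 else if (k : ℕ) = i + 1 then -1 else 0

theorem burauMat_eq_one_add_vecMulVec (n i : ℕ) :
    burauMat n i = 1 + vecMulVec (burauCol n i) (burauRow n i) := by
  ext j k
  have := @Fin.val_injective n j k
  simp only [burauMat, burauCol, burauRow, Matrix.add_apply, one_apply, of_apply, vecMulVec_apply]
  split_ifs <;> simp_all

theorem burauRow_dotProduct_burauCol {n i : ℕ} (hi : i + 1 < n) :
    burauRow n i ⬝ᵥ burauCol n i = 0 := by
  have hterm : ∀ k : Fin n, burauRow n i k * burauCol n i k =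
      (if k = ⟨i, by omega⟩ then 1 else 0) + (if k = ⟨i + 1, hi⟩ then -1 else 0) := by
    intro k
    simp only [burauRow, burauCol, Fin.ext_iff]
    split_ifs <;> simp_all
  simp [dotProduct, hterm, Finset.sum_add_distrib]

theorem burauMat_pow {n i : ℕ} (hi : i + 1 < n) (k : ℕ) :
    burauMat n i ^ k = 1 + k * vecMulVec (burauCol n i) (burauRow n i) := by
  rw [burauMat_eq_one_add_vecMulVec]
  refine one_add_pow_of_mul_self_eq_zero ?_ k
  rw [vecMulVec_mul_vecMulVec, burauRow_dotProduct_burauCol hi, zero_smul, vecMulVec_zero]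

theorem burauMat_map_pow_eq_one {n i : ℕ} (hi : i + 1 < n) (k : ℕ) :
    (burauMat n i).map (Int.cast : ℤ → ZMod k) ^ k = 1 := by
  have := congrArg (Int.castRingHom (ZMod k)).mapMatrix (burauMat_pow hi k)
  rwa [map_pow, map_add, _root_.map_one, _root_.map_mul, map_natCast, ← diagonal_natCast,
    ZMod.natCast_self, diagonal_zero, zero_mul, add_zero] at this

theorem σ_pow_mem_braidCong {n : ℕ} {ρ : BraidGroup n →* GeneralLinearGroup (Fin n) ℤ}
    (hρ : IsBurau ρ) (i : Fin (n - 1)) (k : ℕ) : σ i ^ k ∈ braidCong ρ k := by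
  have hval : (glMod n k (ρ (σ i)) : Matrix (Fin n) (Fin n) (ZMod k)) =
      (burauMat n i).map Int.cast := by
    rw [← hρ i]
    rfl
  rw [braidCong, MonoidHom.mem_ker, map_pow, Units.ext_iff, Units.val_pow_eq_pow_val,
    MonoidHom.comp_apply, hval, Units.val_one]
  exact burauMat_map_pow_eq_one (by omega) k

theorem closure_range_σ (n : ℕ) : Subgroup.closure (Set.range (σ (n := n))) = ⊤ :=
  PresentedGroup.closure_range_of _

open Pointwise in
theorem braidCong_mul_coprime_general {n : ℕ} (ρ : BraidGroup n →* Matrix.GeneralLinearGroup (Fin n) ℤ)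
    (hρ : IsBurau ρ) (ℓ m : ℕ) (h : Nat.gcd ℓ m = 1) :
    (braidCong ρ ℓ : Set (BraidGroup n)) * (braidCong ρ m : Set (BraidGroup n)) =
      Set.univ := by
  rw [← Subgroup.normal_mul, Subgroup.coe_eq_univ, eq_top_iff, ← closure_range_σ,
    Subgroup.closure_le]
  rintro _ ⟨i, rfl⟩
  exact Subgroup.mem_sup_of_pow_mem_of_coprime h (σ_pow_mem_braidCong hρ i ℓ)
    (σ_pow_mem_braidCong hρ i m)

open Pointwise in
theorem braidCong_mul_coprime {n : ℕ} (ρ : BraidGroup n →* Matrix.GeneralLinearGroup (Fin n) ℤ)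
    (hρ : IsBurau ρ) (ℓ m : ℕ) (hℓ : 0 < ℓ) (hm : 0 < m) (h : Nat.gcd ℓ m = 1) :
    (braidCong ρ ℓ : Set (BraidGroup n)) * (braidCong ρ m : Set (BraidGroup n)) =
      Set.univ :=
  braidCong_mul_coprime_general ρ hρ ℓ m h
end

section
/- Each Burau matrix ρ(σ_i) ∈ GL(n, ℤ) fixes the vector v_n = e₁ + e₂ + ⋯ + e_n, satisfies w_nᵀ ρ(σ_i) = w_nᵀ for w_n = e₁ − e₂ + ⋯ + (−1)^{n−1} e_n, and preserves the alternating bilinear form on ℤⁿ defined by ⟨e_i, e_j⟩ = (−1)^{i+j+1} for i < j, ⟨e_i, e_i⟩ = 0, and ⟨e_i, e_j⟩ = (−1)^{i+j} for i > j. -/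
/-!
In 0-indexed coordinates `burauMat n i = 1 + u vᵀ` with `u = e_i + e_{i+1}` and
`v = e_i - e_{i+1}`, so `v ⬝ᵥ v_n = 0` and `w_n ⬝ᵥ u = 0` give the first two claims.
For the form: the Gram matrix `J` is antisymmetric, and `J u = v` because columns `i` and
`i + 1` of `J` cancel outside rows `i`, `i + 1`. For any antisymmetric `J`, expanding
`(1 + v uᵀ) J (1 + u vᵀ)` with `J u = v`, `uᵀ J = -vᵀ` leaves
`J + v vᵀ - v vᵀ - (v ⬝ᵥ u) v vᵀ`, and `v ⬝ᵥ u = 0`.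
-/

open Matrix

/-- The Gram matrix of the alternating bilinear form on `ℤⁿ` with
`⟨e_i, e_j⟩ = (−1)^{i+j+1}` for `i < j`, `0` for `i = j`, and `(−1)^{i+j}` for `i > j`. -/
def altJ (n : ℕ) : Matrix (Fin n) (Fin n) ℤ :=
  Matrix.of fun i j =>
    if (i : ℕ) < (j : ℕ) then (-1) ^ ((i : ℕ) + (j : ℕ) + 1)
    else if (i : ℕ) = (j : ℕ) then 0
    else (-1) ^ ((i : ℕ) + (j : ℕ))

/-- The alternating bilinear form `⟨v, w⟩` on `ℤⁿ`. -/
def altForm (n : ℕ) (v w : Fin n → ℤ) : ℤ := v ⬝ᵥ (altJ n).mulVec w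

/-- The vector `v_n = e₁ + ⋯ + e_n`. -/
def vVec (n : ℕ) : Fin n → ℤ := fun _ => 1

/-- The vector `w_n = e₁ − e₂ + ⋯ + (−1)^{n−1} e_n`. -/
def wVec (n : ℕ) : Fin n → ℤ := fun i => (-1) ^ (i : ℕ)

section RankOnePerturbation

variable {ι R : Type*} [Fintype ι] [DecidableEq ι] [CommRing R]

theorem one_add_vecMulVec_mulVec_of_dotProduct_eq_zero {u v x : ι → R} (h : v ⬝ᵥ x = 0) :
    (1 + vecMulVec u v) *ᵥ x = x := by
  rw [add_mulVec, one_mulVec, vecMulVec_mulVec, h, MulOpposite.op_zero, zero_smul, add_zero]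

theorem vecMul_one_add_vecMulVec_of_dotProduct_eq_zero {u v x : ι → R} (h : x ⬝ᵥ u = 0) :
    x ᵥ* (1 + vecMulVec u v) = x := by
  rw [vecMul_add, vecMul_one, vecMul_vecMulVec, h, zero_smul, add_zero]

theorem transpose_one_add_vecMulVec_mul_mul_of_transpose_eq_neg {J : Matrix ι ι R}
    (hJ : Jᵀ = -J) {u : ι → R} (hu : (J *ᵥ u) ⬝ᵥ u = 0) :
    (1 + vecMulVec u (J *ᵥ u))ᵀ * J * (1 + vecMulVec u (J *ᵥ u)) = J := by
  set v := J *ᵥ u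
  have huJ : u ᵥ* J = -v := by rw [← mulVec_transpose, hJ, neg_mulVec]
  have hexpand : (1 + vecMulVec v u) * J * (1 + vecMulVec u v) =
      J + J * vecMulVec u v + vecMulVec v u * J + vecMulVec v u * J * vecMulVec u v := by
    noncomm_ring
  rw [transpose_add, transpose_one, transpose_vecMulVec, hexpand, mul_vecMulVec, vecMulVec_mul,
    huJ, vecMulVec_mul_vecMulVec, neg_dotProduct, hu, neg_zero, zero_smul, vecMulVec_zero,
    vecMulVec_neg, add_zero, add_neg_cancel_right]

end RankOnePerturbation

theorem altJ_transpose (n : ℕ) : (altJ n)ᵀ = -altJ n := by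
  ext j k
  simp only [altJ, transpose_apply, of_apply, neg_apply]
  rcases lt_trichotomy (j : ℕ) k with h | h | h
  · rw [if_neg (by omega), if_neg (by omega), if_pos h, add_comm (k : ℕ), pow_succ]; ring
  · simp [h]
  · rw [if_pos h, if_neg (by omega), if_neg (by omega), add_comm (k : ℕ), pow_succ]; ring

theorem altJ_apply_add_altJ_apply_of_val_eq_succ {n : ℕ} (k j j' : Fin n)
    (hj : (j' : ℕ) = j + 1) :
    altJ n k j + altJ n k j' = if k = j then 1 else if k = j' then -1 else 0 := by
  simp only [altJ, of_apply, Fin.ext_iff, hj]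
  obtain h | h | h | h : (k : ℕ) < j ∨ (k : ℕ) = j ∨ (k : ℕ) = j + 1 ∨ (j : ℕ) + 1 < k := by
    omega
  · rw [if_pos h, if_pos (by omega), if_neg (by omega), if_neg (by omega)]; ring
  · simp [h, Even.neg_one_pow (⟨(j : ℕ) + 1, by omega⟩ : Even ((j : ℕ) + ((j : ℕ) + 1) + 1))]
  · simp [h, Odd.neg_one_pow (⟨(j : ℕ), by omega⟩ : Odd ((j : ℕ) + 1 + j))]
  · rw [if_neg (by omega), if_neg (by omega), if_neg (by omega), if_neg (by omega),
      if_neg (by omega), if_neg (by omega)]; ring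

theorem altJ_mulVec_single_add_single {n : ℕ} (j j' : Fin n) (hj : (j' : ℕ) = j + 1) :
    altJ n *ᵥ (Pi.single j 1 + Pi.single j' 1) = Pi.single j 1 - Pi.single j' 1 := by
  ext k
  simp only [mulVec_add, mulVec_single_one, Pi.add_apply, col_apply,
    altJ_apply_add_altJ_apply_of_val_eq_succ k j j' hj, Pi.sub_apply, Pi.single_apply]
  split_ifs <;> simp_all

theorem burauMat_eq_one_add_vecMulVec_s12 {n : ℕ} (j j' : Fin n) (hj : (j' : ℕ) = j + 1) :
    burauMat n j =
      1 + vecMulVec (Pi.single j 1 + Pi.single j' 1) (Pi.single j 1 - Pi.single j' 1) := by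
  ext k l
  simp only [burauMat, of_apply, Matrix.add_apply, one_apply, vecMulVec_apply, Pi.add_apply,
    Pi.sub_apply, Pi.single_apply, Fin.ext_iff, hj]
  by_cases h1 : (k : ℕ) = j <;> by_cases h2 : (l : ℕ) = j <;>
    by_cases h3 : (k : ℕ) = j + 1 <;> by_cases h4 : (l : ℕ) = j + 1 <;>
    simp [h1, h2, h3, h4]

theorem burauMat_fixes_v_w_and_form (n : ℕ) (i : ℕ) (hi : i + 1 < n) :
    (burauMat n i).mulVec (vVec n) = vVec n ∧
    Matrix.vecMul (wVec n) (burauMat n i) = wVec n ∧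
    (burauMat n i)ᵀ * altJ n * burauMat n i = altJ n := by
  let j : Fin n := ⟨i, by omega⟩
  let j' : Fin n := ⟨i + 1, hi⟩
  have hjj' : (j' : ℕ) = j + 1 := rfl
  have hne : j ≠ j' := by simp [j, j', Fin.ext_iff]
  have hB : burauMat n i = _ := burauMat_eq_one_add_vecMulVec_s12 j j' hjj'
  refine ⟨?_, ?_, ?_⟩
  · rw [hB]
    exact one_add_vecMulVec_mulVec_of_dotProduct_eq_zero (by simp [vVec])
  · rw [hB]
    exact vecMul_one_add_vecMulVec_of_dotProduct_eq_zero (by simp [wVec, j, j', pow_succ])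
  · rw [hB, ← altJ_mulVec_single_add_single j j' hjj']
    refine transpose_one_add_vecMulVec_mul_mul_of_transpose_eq_neg (altJ_transpose n) ?_
    simp [altJ_mulVec_single_add_single j j' hjj', hne, hne.symm]
end

section
/- Let n = 2g and define Γ_{n−1} ⊆ GL(n, ℤ) as the isometries of the alternating form on ℤⁿ that fix v_n and w_nᵀ. The kernel of the restriction map Γ_{n−1} → Γ'_{n−1} (restriction of a matrix to the invariant sublattice W = ker w_nᵀ) is an infinite cyclic group: it consists of the matrices fixing a₁, b₁, …, a_g and sending b_g to b_g + λ a_g for λ ∈ ℤ. -/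
open Matrix

/-- The vector `a_i = e₁ + ⋯ + e_{2i}` (for `i = 1, …, g`, indexed here by `Fin g`). -/
def aVec (g : ℕ) (i : Fin g) : Fin (2 * g) → ℤ :=
  fun k => if (k : ℕ) < 2 * ((i : ℕ) + 1) then 1 else 0

/-- The vector `b_i = e_{2i} + e_{2i+1}` (for `i = 1, …, g`, indexed here by `Fin g`),
with `b_g = e_n` when `2g = n`. -/
def bVec (g : ℕ) (i : Fin g) : Fin (2 * g) → ℤ :=
  fun k => if (k : ℕ) = 2 * (i : ℕ) + 1 ∨ (k : ℕ) = 2 * (i : ℕ) + 2 then 1 else 0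

lemma sum_range_neg_one_pow_even (t : ℕ) :
    ∑ k ∈ Finset.range (2 * t), (-1 : ℤ) ^ k = 0 := by
  induction t with
  | zero => simp
  | succ t ih =>
    have h : 2 * (t + 1) = (2 * t) + 1 + 1 := by ring
    rw [h, Finset.sum_range_succ, Finset.sum_range_succ, ih]
    simp [pow_succ]

lemma dot_w_lt (n t : ℕ) (h : 2 * t ≤ n) :
    (wVec n) ⬝ᵥ (fun k : Fin n => if (k : ℕ) < 2 * t then (1 : ℤ) else 0) = 0 := by
  show ∑ k : Fin n, (-1 : ℤ) ^ (k : ℕ) * (if (k : ℕ) < 2 * t then (1:ℤ) else 0) = 0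
  rw [Fin.sum_univ_eq_sum_range (fun k => (-1 : ℤ) ^ k * (if k < 2 * t then (1:ℤ) else 0)) n]
  rw [← Finset.sum_subset (Finset.range_subset_range.mpr h)
      (fun x _ hx => by
        rw [Finset.mem_range, not_lt] at hx
        simp [Nat.not_lt.mpr hx])]
  rw [← sum_range_neg_one_pow_even t]
  refine Finset.sum_congr rfl fun x hx => ?_
  rw [Finset.mem_range] at hx
  simp [hx]

lemma dot_w_pair (n j : ℕ) (h : j + 1 < n) :
    (wVec n) ⬝ᵥ (fun k : Fin n => if (k : ℕ) = j ∨ (k : ℕ) = j + 1 then (1 : ℤ) else 0) = 0 := by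
  show ∑ k : Fin n, (-1 : ℤ) ^ (k : ℕ) * (if (k : ℕ) = j ∨ (k : ℕ) = j + 1 then (1:ℤ) else 0) = 0
  have hpt : ∀ k : Fin n,
      (-1 : ℤ) ^ (k : ℕ) * (if (k : ℕ) = j ∨ (k : ℕ) = j + 1 then (1:ℤ) else 0)
        = (if k = (⟨j, by omega⟩ : Fin n) then (-1:ℤ)^j else 0)
          + (if k = (⟨j+1, h⟩ : Fin n) then (-1:ℤ)^(j+1) else 0) := by
    intro k
    simp only [Fin.ext_iff]
    by_cases h1 : (k : ℕ) = j
    · rw [if_pos (Or.inl h1), if_pos h1, if_neg (by omega), h1, add_zero, mul_one]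
    · by_cases h2 : (k : ℕ) = j + 1
      · rw [if_pos (Or.inr h2), if_neg h1, if_pos h2, h2, zero_add, mul_one]
      · rw [if_neg (by tauto), if_neg h1, if_neg h2, mul_zero, add_zero]
  rw [Finset.sum_congr rfl fun k _ => hpt k, Finset.sum_add_distrib,
    Finset.sum_ite_eq' _ _ _, Finset.sum_ite_eq' _ _ _]
  simp [pow_succ]

lemma pair_dot (n j : ℕ) (h : j + 1 < n) (z : Fin n → ℤ) :
    (fun k : Fin n => if (k : ℕ) = j ∨ (k : ℕ) = j + 1 then (1 : ℤ) else 0) ⬝ᵥ z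
      = z ⟨j, by omega⟩ + z ⟨j + 1, h⟩ := by
  show ∑ k : Fin n, (if (k : ℕ) = j ∨ (k : ℕ) = j + 1 then (1:ℤ) else 0) * z k = _
  have hpt : ∀ k : Fin n,
      (if (k : ℕ) = j ∨ (k : ℕ) = j + 1 then (1:ℤ) else 0) * z k
        = (if k = (⟨j, by omega⟩ : Fin n) then z k else 0)
          + (if k = (⟨j+1, h⟩ : Fin n) then z k else 0) := by
    intro k
    simp only [Fin.ext_iff]
    by_cases h1 : (k : ℕ) = j
    · rw [if_pos (Or.inl h1), if_pos h1, if_neg (by omega), one_mul, add_zero]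
    · by_cases h2 : (k : ℕ) = j + 1
      · rw [if_pos (Or.inr h2), if_neg h1, if_pos h2, one_mul, zero_add]
      · rw [if_neg (by tauto), if_neg h1, if_neg h2, zero_mul, add_zero]
  rw [Finset.sum_congr rfl fun k _ => hpt k, Finset.sum_add_distrib,
    Finset.sum_ite_eq' _ _ _, Finset.sum_ite_eq' _ _ _]
  simp

lemma altJ_row_pair (n j : ℕ) (h : j + 1 < n) (m : Fin n) :
    altJ n ⟨j, by omega⟩ m + altJ n ⟨j + 1, h⟩ m
      = (if m = (⟨j + 1, h⟩ : Fin n) then 1 else 0)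
        - (if m = (⟨j, by omega⟩ : Fin n) then 1 else 0) := by
  simp only [altJ, Matrix.of_apply, Fin.ext_iff]
  rcases lt_trichotomy (m : ℕ) j with hm | hm | hm
  · rw [if_neg (show ¬ (j < (m:ℕ)) by omega), if_neg (show ¬ (j = (m:ℕ)) by omega),
      if_neg (show ¬ (j + 1 < (m:ℕ)) by omega), if_neg (show ¬ (j + 1 = (m:ℕ)) by omega),
      if_neg (show ¬ ((m:ℕ) = j + 1) by omega), if_neg (show ¬ ((m:ℕ) = j) by omega)]
    have h2 : j + 1 + (m : ℕ) = (j + (m : ℕ)) + 1 := by omega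
    rw [h2, pow_succ]; ring
  · rw [if_neg (show ¬ (j < (m:ℕ)) by omega), if_pos (show j = (m:ℕ) by omega),
      if_neg (show ¬ (j + 1 < (m:ℕ)) by omega), if_neg (show ¬ (j + 1 = (m:ℕ)) by omega),
      if_neg (show ¬ ((m:ℕ) = j + 1) by omega), if_pos (show (m:ℕ) = j by omega)]
    have h2 : j + 1 + (m : ℕ) = 2 * j + 1 := by omega
    rw [h2, pow_succ, pow_mul]
    norm_num
  · rcases Nat.lt_or_ge (j + 1) (m : ℕ) with hm2 | hm2
    · rw [if_pos (show j < (m:ℕ) by omega), if_pos (show j + 1 < (m:ℕ) by omega),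
        if_neg (show ¬ ((m:ℕ) = j + 1) by omega), if_neg (show ¬ ((m:ℕ) = j) by omega)]
      have h2 : j + 1 + (m : ℕ) + 1 = (j + (m : ℕ) + 1) + 1 := by omega
      rw [h2, pow_succ]; ring
    · have hmj : (m : ℕ) = j + 1 := by omega
      rw [if_pos (show j < (m:ℕ) by omega), if_neg (show ¬ (j + 1 < (m:ℕ)) by omega),
        if_pos (show j + 1 = (m:ℕ) by omega), if_pos (show (m:ℕ) = j + 1 by omega),
        if_neg (show ¬ ((m:ℕ) = j) by omega)]
      have h2 : j + (m : ℕ) + 1 = 2 * (j + 1) := by omega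
      rw [h2, pow_mul]
      norm_num

lemma pair_form (n j : ℕ) (h : j + 1 < n) (y : Fin n → ℤ) :
    (fun k : Fin n => if (k : ℕ) = j ∨ (k : ℕ) = j + 1 then (1 : ℤ) else 0) ⬝ᵥ (altJ n).mulVec y
      = y ⟨j + 1, h⟩ - y ⟨j, by omega⟩ := by
  rw [pair_dot n j h]
  show (∑ m, altJ n ⟨j, by omega⟩ m * y m) + (∑ m, altJ n ⟨j+1, h⟩ m * y m) = _
  rw [← Finset.sum_add_distrib]
  have hpt : ∀ m : Fin n, altJ n ⟨j, by omega⟩ m * y m + altJ n ⟨j+1, h⟩ m * y m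
      = (if m = (⟨j+1, h⟩ : Fin n) then y m else 0)
        - (if m = (⟨j, by omega⟩ : Fin n) then y m else 0) := by
    intro m
    rw [← add_mul, altJ_row_pair n j h m, sub_mul, ite_mul, ite_mul, one_mul, zero_mul]
  rw [Finset.sum_congr rfl fun m _ => hpt m, Finset.sum_sub_distrib,
    Finset.sum_ite_eq' _ _ _, Finset.sum_ite_eq' _ _ _]
  simp

/-- The kernel of the restriction map `Γ_{n-1} → Γ'_{n-1}` (restriction to `W = ker w_nᵀ`)
consists exactly of the matrices fixing `a₁, b₁, …, b_{g-1}, a_g` and sending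
`b_g ↦ b_g + λ a_g` for a (unique) `λ ∈ ℤ`; this identifies the kernel with the infinite
cyclic group `ℤ`. -/
theorem restriction_kernel_infinite_cyclic (g : ℕ) (hg : 0 < g)
    (A : Matrix (Fin (2 * g)) (Fin (2 * g)) ℤ)
    (hJ : Aᵀ * altJ (2 * g) * A = altJ (2 * g))
    (hv : A.mulVec (vVec (2 * g)) = vVec (2 * g))
    (hw : Matrix.vecMul (wVec (2 * g)) A = wVec (2 * g)) :
    (∀ u : Fin (2 * g) → ℤ, wVec (2 * g) ⬝ᵥ u = 0 → A.mulVec u = u) ↔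
      ∃! l : ℤ,
        (∀ i : Fin g, A.mulVec (aVec g i) = aVec g i) ∧
        (∀ i : Fin g, (i : ℕ) + 1 < g → A.mulVec (bVec g i) = bVec g i) ∧
        A.mulVec (bVec g ⟨g - 1, by omega⟩) =
          bVec g ⟨g - 1, by omega⟩ + l • aVec g ⟨g - 1, by omega⟩ := by
  have hbs : ∀ i : Fin g, bVec g i
      = fun k : Fin (2 * g) => if (k : ℕ) = 2 * (i:ℕ) + 1 ∨ (k : ℕ) = (2 * (i:ℕ) + 1) + 1 then (1:ℤ) else 0 := by
    intro i; funext k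
    exact if_congr (by omega) rfl rfl
  constructor
  · intro H
    have ha : ∀ i : Fin g, A.mulVec (aVec g i) = aVec g i := by
      intro i
      exact H _ (dot_w_lt (2 * g) ((i : ℕ) + 1) (by omega))
    have hfix : ∀ j : ℕ, j + 1 < 2 * g →
        A.mulVec (fun k : Fin (2*g) => if (k:ℕ) = j ∨ (k:ℕ) = j + 1 then (1:ℤ) else 0)
          = fun k : Fin (2*g) => if (k:ℕ) = j ∨ (k:ℕ) = j + 1 then (1:ℤ) else 0 :=
      fun j hj => H _ (dot_w_pair (2*g) j hj)
    have hb : ∀ i : Fin g, (i : ℕ) + 1 < g → A.mulVec (bVec g i) = bVec g i := by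
      intro i hi
      rw [hbs i]
      exact hfix (2 * (i:ℕ) + 1) (by omega)
    set b : Fin (2*g) → ℤ := bVec g ⟨g - 1, by omega⟩ with hbdef
    set u : Fin (2*g) → ℤ := A.mulVec b - b with hudef
    -- symplectic invariance step
    have hsymp : ∀ j : ℕ, (hj : j + 1 < 2 * g) →
        u ⟨j + 1, hj⟩ = u ⟨j, by omega⟩ := by
      intro j hj
      set x : Fin (2*g) → ℤ :=
        fun k => if (k:ℕ) = j ∨ (k:ℕ) = j + 1 then (1:ℤ) else 0 with hxdef
      have hx : A.mulVec x = x := hfix j hj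
      have key : x ⬝ᵥ (altJ (2*g)).mulVec (A.mulVec b) = x ⬝ᵥ (altJ (2*g)).mulVec b := by
        conv_lhs => rw [← hx]
        rw [Matrix.mulVec_mulVec, ← Matrix.transpose_transpose A, Matrix.mulVec_transpose,
          Matrix.dotProduct_mulVec, Matrix.vecMul_vecMul, Matrix.transpose_transpose,
          ← Matrix.mul_assoc, hJ, ← Matrix.dotProduct_mulVec]
      rw [hxdef] at key
      rw [pair_form (2*g) j hj, pair_form (2*g) j hj] at key
      have : u ⟨j+1, hj⟩ - u ⟨j, by omega⟩ = 0 := by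
        simp only [hudef, Pi.sub_apply]
        linarith
      linarith [this]
    have hconst : ∀ m : ℕ, (hm : m < 2 * g) → u ⟨m, hm⟩ = u ⟨0, by omega⟩ := by
      intro m
      induction m with
      | zero => intro hm; rfl
      | succ m ih =>
        intro hm
        rw [hsymp m hm]
        exact ih (by omega)
    have ha1 : ∀ k : Fin (2*g), aVec g ⟨g - 1, by omega⟩ k = 1 := by
      intro k
      simp only [aVec]
      rw [if_pos (by omega)]
    refine ⟨u ⟨0, by omega⟩, ⟨ha, hb, ?_⟩, ?_⟩
    · funext k
      have hk := hconst (k : ℕ) k.isLt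
      have hk' : u k = u ⟨0, by omega⟩ := by rwa [Fin.eta] at hk
      have : (A.mulVec b) k - b k = u ⟨0, by omega⟩ := by
        simpa [hudef] using hk'
      simp only [Pi.add_apply, Pi.smul_apply, smul_eq_mul, ha1 k]
      linarith
    · rintro l' ⟨-, -, h'⟩
      have h2 : A.mulVec b = b + u ⟨0, by omega⟩ • aVec g ⟨g - 1, by omega⟩ := by
        funext k
        have hk := hconst (k : ℕ) k.isLt
        have hk' : u k = u ⟨0, by omega⟩ := by rwa [Fin.eta] at hk
        have : (A.mulVec b) k - b k = u ⟨0, by omega⟩ := by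
          simpa [hudef] using hk'
        simp only [Pi.add_apply, Pi.smul_apply, smul_eq_mul, ha1 k]
        linarith
      have := h'.symm.trans h2
      have h0 := congrFun this ⟨0, by omega⟩
      simp only [Pi.add_apply, Pi.smul_apply, smul_eq_mul, ha1 ⟨0, by omega⟩] at h0
      linarith
  · rintro ⟨l, ⟨ha, hb, hbg⟩, -⟩
    intro u hu
    set s : ℕ → Fin (2 * g) → ℤ :=
      fun j k => if (k : ℕ) = j ∨ (k : ℕ) = j + 1 then 1 else 0 with hsdef
    set c : ℕ → ℤ :=
      fun j => ∑ t : Fin (2 * g), if j < (t : ℕ) then (-1 : ℤ) ^ (j + (t : ℕ) + 1) * u t else 0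
      with hcdef
    have key : ∀ j : ℕ,
        c j = ∑ t : Fin (2 * g), if j < (t : ℕ) then (-1 : ℤ) ^ (j + (t : ℕ) + 1) * u t else 0 :=
      fun j => rfl
    -- A fixes each s j for j < 2g - 1
    have hfixS : ∀ j : ℕ, j < 2 * g - 1 → A.mulVec (s j) = s j := by
      intro j hj
      rcases Nat.even_or_odd j with ⟨i, hi⟩ | ⟨i, hi⟩
      · -- j = i + i
        rcases Nat.eq_zero_or_pos i with hi0 | hi0
        · have hs : s j = aVec g ⟨0, hg⟩ := by
            funext k
            simp only [hsdef, aVec]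
            exact if_congr (by omega) rfl rfl
          rw [hs]; exact ha _
        · have hig : i < g := by omega
          have hs : s j = aVec g ⟨i, hig⟩ - aVec g ⟨i - 1, by omega⟩ := by
            funext k
            simp only [hsdef, aVec, Pi.sub_apply]
            split_ifs <;> omega
          rw [hs, Matrix.mulVec_sub, ha, ha]
      · -- j = 2 * i + 1
        have hig : (i : ℕ) + 1 < g := by omega
        have hs : s j = bVec g ⟨i, by omega⟩ := by
          funext k
          simp only [hsdef, bVec]
          exact if_congr (by omega) rfl rfl
        rw [hs]
        exact hb _ hig
    have hc1 : ∀ m : ℕ, 1 ≤ m → ∀ hm : m < 2 * g, c m + c (m - 1) = u ⟨m, hm⟩ := by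
      intro m hm1 hm
      have hpt : ∀ t : Fin (2 * g),
          (if m < (t : ℕ) then (-1 : ℤ) ^ (m + (t : ℕ) + 1) * u t else 0)
            + (if m - 1 < (t : ℕ) then (-1 : ℤ) ^ ((m - 1) + (t : ℕ) + 1) * u t else 0)
            = if t = (⟨m, hm⟩ : Fin (2 * g)) then u t else 0 := by
        intro t
        rcases lt_trichotomy (t : ℕ) m with h1 | h1 | h1
        · rw [if_neg (by omega), if_neg (by omega),
            if_neg (by simp only [Fin.ext_iff]; omega), add_zero]
        · rw [if_neg (by omega), if_pos (by omega),
            if_pos (by simp only [Fin.ext_iff]; omega), zero_add]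
          have h2 : (m - 1) + (t : ℕ) + 1 = 2 * m := by omega
          rw [h2, pow_mul]
          norm_num
        · rw [if_pos (by omega), if_pos (by omega),
            if_neg (by simp only [Fin.ext_iff]; omega)]
          have h2 : m + (t : ℕ) + 1 = ((m - 1) + (t : ℕ) + 1) + 1 := by omega
          rw [h2, pow_succ]
          ring
      rw [key, key, ← Finset.sum_add_distrib, Finset.sum_congr rfl fun t _ => hpt t,
        Finset.sum_ite_eq' _ _ _]
      simp
    have hc0 : c 0 = u ⟨0, by omega⟩ := by
      have hu' : ∑ t : Fin (2 * g), (-1 : ℤ) ^ (t : ℕ) * u t = 0 := hu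
      have hpt : ∀ t : Fin (2 * g),
          (if 0 < (t : ℕ) then (-1 : ℤ) ^ (0 + (t : ℕ) + 1) * u t else 0)
            + (-1 : ℤ) ^ (t : ℕ) * u t
            = if t = (⟨0, by omega⟩ : Fin (2 * g)) then u t else 0 := by
        intro t
        rcases Nat.eq_zero_or_pos (t : ℕ) with h1 | h1
        · rw [if_neg (by omega), if_pos (by simp only [Fin.ext_iff]; omega), h1, zero_add, pow_zero,
            one_mul]
        · rw [if_pos h1, if_neg (by simp only [Fin.ext_iff]; omega)]
          have h2 : 0 + (t : ℕ) + 1 = (t : ℕ) + 1 := by omega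
          rw [h2, pow_succ]
          ring
      have := Finset.sum_congr rfl fun t (_ : t ∈ Finset.univ) => hpt t
      rw [Finset.sum_add_distrib, hu', add_zero, Finset.sum_ite_eq' _ _ _] at this
      rw [key]
      simpa using this
    have hctop : c (2 * g - 1) = 0 := by
      rw [key]
      refine Finset.sum_eq_zero fun t _ => ?_
      rw [if_neg (by have := t.isLt; omega)]
    have hspan : u = ∑ j ∈ Finset.range (2 * g - 1), c j • s j := by
      funext k
      rw [Finset.sum_apply]
      simp only [Pi.smul_apply, smul_eq_mul]
      symm
      by_cases hk0 : (k : ℕ) = 0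
      · have hpt : ∀ j ∈ Finset.range (2 * g - 1), c j * s j k = if j = 0 then c 0 else 0 := by
          intro j _
          simp only [hsdef]
          by_cases hj : j = 0
          · subst hj; rw [if_pos (by omega), if_pos rfl, mul_one]
          · rw [if_neg (by omega), if_neg hj, mul_zero]
        rw [Finset.sum_congr rfl hpt, Finset.sum_ite_eq' _ _ _,
          if_pos (Finset.mem_range.mpr (by omega)), hc0]
        exact congrArg u (Fin.ext hk0).symm
      · have hpt : ∀ j ∈ Finset.range (2 * g - 1), c j * s j k
            = (if j = (k : ℕ) then c (k : ℕ) else 0)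
              + (if j = (k : ℕ) - 1 then c ((k : ℕ) - 1) else 0) := by
          intro j _
          simp only [hsdef]
          by_cases h1 : j = (k : ℕ)
          · subst h1
            rw [if_pos (Or.inl rfl), mul_one, if_pos rfl, if_neg (by omega), add_zero]
          · by_cases h2 : j = (k : ℕ) - 1
            · subst h2
              rw [if_pos (Or.inr (by omega)), mul_one, if_neg h1, if_pos rfl, zero_add]
            · rw [if_neg (by omega), mul_zero, if_neg h1, if_neg h2, add_zero]
        rw [Finset.sum_congr rfl hpt, Finset.sum_add_distrib, Finset.sum_ite_eq' _ _ _,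
          Finset.sum_ite_eq' _ _ _,
          if_pos (Finset.mem_range.mpr (show (k : ℕ) - 1 < 2 * g - 1 by have := k.isLt; omega))]
        by_cases hk : (k : ℕ) < 2 * g - 1
        · rw [if_pos (Finset.mem_range.mpr hk)]
          have h1 := hc1 (k : ℕ) (by omega) k.isLt
          rw [Fin.eta] at h1
          exact h1
        · rw [if_neg (by simp only [Finset.mem_range]; omega), zero_add]
          have hk' : (k : ℕ) = 2 * g - 1 := by have := k.isLt; omega
          have h1 := hc1 (2 * g - 1) (by omega) (by omega)
          rw [hctop, zero_add] at h1
          rw [show (k : ℕ) - 1 = 2 * g - 1 - 1 by omega, h1]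
          exact congrArg u (Fin.ext hk'.symm)
    conv_lhs => rw [hspan]
    rw [← Matrix.mulVecLin_apply, map_sum]
    have hterm : ∀ j ∈ Finset.range (2 * g - 1), A.mulVecLin (c j • s j) = c j • s j := by
      intro j hj
      rw [LinearMap.map_smul, Matrix.mulVecLin_apply, hfixS j (Finset.mem_range.mp hj)]
    rw [Finset.sum_congr rfl hterm, ← hspan]
end

section
/- Let V = ℤ^{2g−1} with the alternating form ⟨e_i, e_j⟩' = −1 if j = i+1, 1 if j = i−1, 0 otherwise, and let v' = e₁ + e₃ + ⋯ + e_{2g−1}. Let Γ' be the group of form-preserving automorphisms of V fixing v'. Then Γ' is isomorphic to the semidirect product Sp(2g−2, ℤ) ⋉ ℤ^{2g−2}, where the kernel of the natural map Γ' → Sp(2g−2, ℤ) (induced on V modulo the span of v') is free abelian of rank 2g−2. -/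
open Matrix
open scoped MatrixGroups

/-- The Gram matrix of the alternating form `⟨e_i, e_j⟩' = −1` if `j = i+1`, `1` if
`j = i−1`, `0` otherwise, on `ℤ^{2g−1}`. -/
def primeJ (g : ℕ) : Matrix (Fin (2 * g - 1)) (Fin (2 * g - 1)) ℤ :=
  Matrix.of fun i j =>
    if (j : ℕ) = (i : ℕ) + 1 then -1
    else if (i : ℕ) = (j : ℕ) + 1 then 1
    else 0

/-- The vector `v' = e₁ + e₃ + ⋯ + e_{2g−1}` in `ℤ^{2g−1}`. -/
def vPrime (g : ℕ) : Fin (2 * g - 1) → ℤ := fun i => if (i : ℕ) % 2 = 0 then 1 else 0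

/-- The subgroup of `GL(m, ℤ)` of automorphisms preserving the bilinear form with Gram
matrix `J` and fixing the vector `v`. -/
def glFormStab (m : ℕ) (J : Matrix (Fin m) (Fin m) ℤ) (v : Fin m → ℤ) :
    Subgroup (GL (Fin m) ℤ) where
  carrier := {A | (A : Matrix (Fin m) (Fin m) ℤ)ᵀ * J * (A : Matrix (Fin m) (Fin m) ℤ) = J ∧
    (A : Matrix (Fin m) (Fin m) ℤ).mulVec v = v}
  one_mem' := by
    constructor
    · simp
    · simp [Matrix.one_mulVec]
  mul_mem' := by
    rintro a b ⟨ha1, ha2⟩ ⟨hb1, hb2⟩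
    constructor
    · show ((a * b : GL (Fin m) ℤ) : Matrix (Fin m) (Fin m) ℤ)ᵀ * J *
        ((a * b : GL (Fin m) ℤ) : Matrix (Fin m) (Fin m) ℤ) = J
      rw [Units.val_mul, Matrix.transpose_mul]
      calc ((b : Matrix (Fin m) (Fin m) ℤ)ᵀ * (a : Matrix (Fin m) (Fin m) ℤ)ᵀ) * J *
            ((a : Matrix (Fin m) (Fin m) ℤ) * (b : Matrix (Fin m) (Fin m) ℤ))
          = (b : Matrix (Fin m) (Fin m) ℤ)ᵀ *
              ((a : Matrix (Fin m) (Fin m) ℤ)ᵀ * J * (a : Matrix (Fin m) (Fin m) ℤ)) *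
              (b : Matrix (Fin m) (Fin m) ℤ) := by
            simp only [Matrix.mul_assoc]
        _ = J := by rw [ha1, hb1]
    · show ((a * b : GL (Fin m) ℤ) : Matrix (Fin m) (Fin m) ℤ).mulVec v = v
      rw [Units.val_mul, ← Matrix.mulVec_mulVec, hb2, ha2]
  inv_mem' := by
    rintro a ⟨h1, h2⟩
    constructor
    · show ((a⁻¹ : GL (Fin m) ℤ) : Matrix (Fin m) (Fin m) ℤ)ᵀ * J *
        ((a⁻¹ : GL (Fin m) ℤ) : Matrix (Fin m) (Fin m) ℤ) = J
      conv_lhs => rw [← h1]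
      calc ((a⁻¹ : GL (Fin m) ℤ) : Matrix (Fin m) (Fin m) ℤ)ᵀ *
            ((a : Matrix (Fin m) (Fin m) ℤ)ᵀ * J * (a : Matrix (Fin m) (Fin m) ℤ)) *
            ((a⁻¹ : GL (Fin m) ℤ) : Matrix (Fin m) (Fin m) ℤ)
          = ((a : Matrix (Fin m) (Fin m) ℤ) *
              ((a⁻¹ : GL (Fin m) ℤ) : Matrix (Fin m) (Fin m) ℤ))ᵀ * J *
              ((a : Matrix (Fin m) (Fin m) ℤ) *
                ((a⁻¹ : GL (Fin m) ℤ) : Matrix (Fin m) (Fin m) ℤ)) := by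
            rw [Matrix.transpose_mul]; simp only [Matrix.mul_assoc]
        _ = J := by
            rw [← Units.val_mul, mul_inv_cancel]
            simp
    · show ((a⁻¹ : GL (Fin m) ℤ) : Matrix (Fin m) (Fin m) ℤ).mulVec v = v
      conv_lhs => rw [← h2]
      rw [Matrix.mulVec_mulVec, ← Units.val_mul, inv_mul_cancel]
      simp [Matrix.one_mulVec]

/-- The additive automorphism of `ℤ^{2k}` given by a symplectic matrix. -/
def spVecAut (k : ℕ) (A : Matrix.symplecticGroup (Fin k) ℤ) :
    AddAut ((Fin k ⊕ Fin k) → ℤ) where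
  toFun v := (A : Matrix (Fin k ⊕ Fin k) (Fin k ⊕ Fin k) ℤ).mulVec v
  invFun v := ((A⁻¹ : Matrix.symplecticGroup (Fin k) ℤ) :
      Matrix (Fin k ⊕ Fin k) (Fin k ⊕ Fin k) ℤ).mulVec v
  left_inv v := by
    show _ *ᵥ _ *ᵥ _ = _
    rw [Matrix.mulVec_mulVec, ← Submonoid.coe_mul, inv_mul_cancel, Submonoid.coe_one,
      Matrix.one_mulVec]
  right_inv v := by
    show _ *ᵥ _ *ᵥ _ = _
    rw [Matrix.mulVec_mulVec, ← Submonoid.coe_mul, mul_inv_cancel, Submonoid.coe_one,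
      Matrix.one_mulVec]
  map_add' x y := Matrix.mulVec_add _ x y

/-- The action of `Sp(2k, ℤ)` on `ℤ^{2k}` by matrix multiplication, as a homomorphism into
the automorphisms of `Multiplicative (ℤ^{2k})`. -/
def spMulAutHom (k : ℕ) :
    Matrix.symplecticGroup (Fin k) ℤ →* MulAut (Multiplicative ((Fin k ⊕ Fin k) → ℤ)) where
  toFun A := AddEquiv.toMultiplicative (spVecAut k A)
  map_one' := by
    apply MulEquiv.ext; intro v
    show ((1 : Matrix.symplecticGroup (Fin k) ℤ) :
        Matrix (Fin k ⊕ Fin k) (Fin k ⊕ Fin k) ℤ).mulVec v.toAdd = v.toAdd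
    rw [Submonoid.coe_one, Matrix.one_mulVec]
  map_mul' A B := by
    apply MulEquiv.ext; intro v
    show ((A * B : Matrix.symplecticGroup (Fin k) ℤ) :
        Matrix (Fin k ⊕ Fin k) (Fin k ⊕ Fin k) ℤ).mulVec v.toAdd =
      (A : Matrix (Fin k ⊕ Fin k) (Fin k ⊕ Fin k) ℤ).mulVec
        ((B : Matrix (Fin k ⊕ Fin k) (Fin k ⊕ Fin k) ℤ).mulVec v.toAdd)
    rw [Submonoid.coe_mul, Matrix.mulVec_mulVec]

/-!
In a basis of `ℤ^{2g−1}` whose last vector is `v'`, the Gram matrix of `⟨·,·⟩'` becomes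
`J ⊕ 0` with `J` the standard symplectic matrix. An automorphism preserving the form and fixing `v'`
then has block shape `[[A, 0], [c, 1]]` with `A ∈ Sp(2g−2, ℤ)` and `c` an arbitrary row, and
`(n, A) ↦ [[A, 0], [nᵀJA, 1]]` identifies `Sp(2g−2, ℤ) ⋉ ℤ^{2g−2}` with the group of these matrices.
-/

open Matrix

theorem Fin.sum_ite_val_eq {M : Type*} [AddCommMonoid M] {n : ℕ} (t : ℕ) (f : Fin n → M) :
    ∑ r : Fin n, (if (r : ℕ) = t then f r else 0) = if h : t < n then f ⟨t, h⟩ else 0 := by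
  split_ifs with h
  · rw [Fintype.sum_eq_single ⟨t, h⟩ fun r hr => if_neg fun hrt => hr (Fin.ext hrt), if_pos rfl]
  · exact Finset.sum_eq_zero fun r _ => if_neg fun (hrt : (r : ℕ) = t) => h (hrt ▸ r.isLt)

theorem Fin.sum_ite_eq_val_add_one {M : Type*} [AddCommMonoid M] {n : ℕ} (t : ℕ)
    (f : Fin n → M) :
    ∑ r : Fin n, (if t = (r : ℕ) + 1 then f r else 0) =
      if h : 0 < t ∧ t - 1 < n then f ⟨t - 1, h.2⟩ else 0 := by
  rcases Nat.eq_zero_or_pos t with rfl | ht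
  · simp
  · simp only [ht, true_and]
    rw [← Fin.sum_ite_val_eq]
    exact Finset.sum_congr rfl fun r _ => if_congr (by omega) rfl rfl

namespace Matrix

def degenerateJ (ι R : Type*) [DecidableEq ι] [CommRing R] :
    Matrix ((ι ⊕ ι) ⊕ Unit) ((ι ⊕ ι) ⊕ Unit) R :=
  fromBlocks (J ι R) 0 0 0

variable {R : Type*} [CommRing R]

section FormStabilizer

variable {m n : Type*} [Fintype m] [Fintype n] [DecidableEq m] [DecidableEq n]

def formStabilizer (J : Matrix n n R) (v : n → R) : Set (Matrix n n R) :=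
  {X | Xᵀ * J * X = J ∧ X *ᵥ v = v}

def conjMulEquiv {P : Matrix m n R} {Q : Matrix n m R} (hPQ : P * Q = 1) (hQP : Q * P = 1) :
    Matrix m m R ≃* Matrix n n R where
  toFun X := Q * X * P
  invFun Y := P * Y * Q
  left_inv X := by
    simp only [Matrix.mul_assoc, hPQ, Matrix.mul_one, ← Matrix.mul_assoc P Q, Matrix.one_mul]
  right_inv Y := by
    simp only [Matrix.mul_assoc, hQP, Matrix.mul_one, ← Matrix.mul_assoc Q P, Matrix.one_mul]
  map_mul' X Y := by simp only [Matrix.mul_assoc, ← Matrix.mul_assoc P Q, hPQ, Matrix.one_mul]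

theorem mul_mul_mem_formStabilizer_iff {P : Matrix m n R} {Q : Matrix n m R} (hPQ : P * Q = 1)
    (hQP : Q * P = 1) {J : Matrix m m R} {v : m → R} {X : Matrix n n R} :
    P * X * Q ∈ formStabilizer J v ↔ X ∈ formStabilizer (Pᵀ * J * P) (Q *ᵥ v) := by
  have hPQt : Qᵀ * Pᵀ = 1 := by rw [← transpose_mul, hPQ, transpose_one]
  have hQPt : Pᵀ * Qᵀ = 1 := by rw [← transpose_mul, hQP, transpose_one]
  constructor
  · rintro ⟨hJ, hv⟩
    constructor
    · calc Xᵀ * (Pᵀ * J * P) * X = Pᵀ * ((P * X * Q)ᵀ * J * (P * X * Q)) * P := by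
            simp only [transpose_mul, Matrix.mul_assoc, hQP, Matrix.mul_one]
            simp only [← Matrix.mul_assoc, hQPt, Matrix.one_mul]
        _ = Pᵀ * J * P := by rw [hJ]
    · calc X *ᵥ (Q *ᵥ v) = Q *ᵥ ((P * X * Q) *ᵥ v) := by
            simp only [mulVec_mulVec, ← Matrix.mul_assoc, hQP, Matrix.one_mul]
        _ = Q *ᵥ v := by rw [hv]
  · rintro ⟨hJ, hv⟩
    constructor
    · calc (P * X * Q)ᵀ * J * (P * X * Q) = Qᵀ * (Xᵀ * (Pᵀ * J * P) * X) * Q := by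
            simp only [transpose_mul, Matrix.mul_assoc]
        _ = J := by
            rw [hJ]
            simp only [Matrix.mul_assoc, hPQ, Matrix.mul_one]
            simp only [← Matrix.mul_assoc, hPQt, Matrix.one_mul]
    · rw [← mulVec_mulVec, ← mulVec_mulVec, hv, mulVec_mulVec, hPQ, one_mulVec]

end FormStabilizer

section AffineBlock

variable {ι : Type*}

def affineBlock (S : Matrix ι ι R) (c : ι → R) : Matrix (ι ⊕ Unit) (ι ⊕ Unit) R :=
  fromBlocks S 0 (replicateRow Unit c) 1

theorem affineBlock_mul [Fintype ι] (S S' : Matrix ι ι R) (c c' : ι → R) :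
    affineBlock S c * affineBlock S' c' = affineBlock (S * S') (c ᵥ* S' + c') := by
  simp [affineBlock, fromBlocks_multiply, replicateRow_add, replicateRow_vecMul]

theorem affineBlock_one [DecidableEq ι] : affineBlock (1 : Matrix ι ι R) 0 = 1 := by
  rw [affineBlock, replicateRow_zero, fromBlocks_one]

theorem affineBlock_inj {S S' : Matrix ι ι R} {c c' : ι → R} :
    affineBlock S c = affineBlock S' c' ↔ S = S' ∧ c = c' := by
  refine ⟨fun h => ?_, fun h => h.1 ▸ h.2 ▸ rfl⟩
  obtain ⟨hS, -, hc, -⟩ := fromBlocks_inj.mp h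
  exact ⟨hS, funext fun j => congrFun (congrFun hc ()) j⟩

variable [Fintype ι] [DecidableEq ι]

theorem mulVec_single_inr_eq_iff (X : Matrix (ι ⊕ Unit) (ι ⊕ Unit) R) :
    X *ᵥ Pi.single (Sum.inr ()) 1 = Pi.single (Sum.inr ()) 1 ↔
      ∃ S c, X = affineBlock S c := by
  rw [mulVec_single_one]
  constructor
  · intro h
    refine ⟨X.toBlocks₁₁, fun j => X (Sum.inr ()) (Sum.inl j), ?_⟩
    rw [← fromBlocks_toBlocks X, affineBlock]
    congr 1
    · ext i ⟨⟩; simpa [toBlocks₁₂] using congrFun h (Sum.inl i)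
    · ext ⟨⟩ ⟨⟩; simpa [toBlocks₂₂] using congrFun h (Sum.inr ())
  · rintro ⟨S, c, rfl⟩
    ext (i | i) <;> simp [affineBlock]

theorem affineBlock_mulVec_single_inr (S : Matrix ι ι R) (c : ι → R) :
    affineBlock S c *ᵥ Pi.single (Sum.inr ()) 1 = Pi.single (Sum.inr ()) 1 :=
  (mulVec_single_inr_eq_iff _).mpr ⟨S, c, rfl⟩

theorem affineBlock_mem_formStabilizer_iff (J S : Matrix ι ι R) (c : ι → R) :
    affineBlock S c ∈ formStabilizer (fromBlocks J 0 0 0) (Pi.single (Sum.inr ()) 1) ↔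
      Sᵀ * J * S = J := by
  simp only [formStabilizer, Set.mem_ofPred_eq, affineBlock_mulVec_single_inr, and_true]
  simp [affineBlock, fromBlocks_transpose, fromBlocks_multiply, fromBlocks_inj]

end AffineBlock

end Matrix

namespace SymplecticGroup

variable {R : Type*} [CommRing R] {ι : Type*} [Fintype ι] [DecidableEq ι]
  {A : Matrix (ι ⊕ ι) (ι ⊕ ι) R}

theorem mulVec_vecMul_J_mul (hA : A ∈ symplecticGroup ι R) (v : ι ⊕ ι → R) :
    (A *ᵥ v) ᵥ* (J ι R * A) = v ᵥ* J ι R := by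
  rw [← vecMul_transpose, vecMul_vecMul, ← Matrix.mul_assoc, mem_iff'.mp hA]

theorem neg_J_mul_transpose_mul_J_mul (hA : A ∈ symplecticGroup ι R) :
    -(J ι R * Aᵀ) * (J ι R * A) = 1 := by
  rw [Matrix.neg_mul, Matrix.mul_assoc, ← Matrix.mul_assoc Aᵀ, mem_iff'.mp hA, J_squared, neg_neg]

end SymplecticGroup

theorem spMulAutHom_apply_toAdd (k : ℕ) (A : symplecticGroup (Fin k) ℤ)
    (v : Multiplicative (Fin k ⊕ Fin k → ℤ)) :
    (spMulAutHom k A v).toAdd = (A : Matrix (Fin k ⊕ Fin k) (Fin k ⊕ Fin k) ℤ) *ᵥ v.toAdd :=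
  rfl

/-- `(n, A)` acts by `(x, t) ↦ (A x, t + nᵀ J A x)`; the row `nᵀ J A` is chosen so that
`Aᵀ J A = J` turns the semidirect-product law into block-matrix multiplication. -/
def affineSymplecticRep (k : ℕ) :
    SemidirectProduct (Multiplicative (Fin k ⊕ Fin k → ℤ)) (symplecticGroup (Fin k) ℤ)
      (spMulAutHom k) →* Matrix ((Fin k ⊕ Fin k) ⊕ Unit) ((Fin k ⊕ Fin k) ⊕ Unit) ℤ where
  toFun x := affineBlock x.right (x.left.toAdd ᵥ* (J (Fin k) ℤ * x.right))
  map_one' := by simp [affineBlock_one]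
  map_mul' x y := by
    rw [affineBlock_mul, SemidirectProduct.mul_left, SemidirectProduct.mul_right, toAdd_mul,
      spMulAutHom_apply_toAdd, add_vecMul, Submonoid.coe_mul, ← Matrix.mul_assoc,
      ← vecMul_vecMul (_ *ᵥ _), SymplecticGroup.mulVec_vecMul_J_mul x.right.2, vecMul_vecMul,
      vecMul_vecMul, Matrix.mul_assoc]

theorem affineSymplecticRep_injective (k : ℕ) :
    Function.Injective (affineSymplecticRep k).toHomUnits := by
  rw [injective_iff_map_eq_one]
  rintro ⟨n, A⟩ h
  obtain ⟨hA, hn⟩ := affineBlock_inj.mp ((congrArg Units.val h).trans affineBlock_one.symm)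
  obtain rfl : A = 1 := Subtype.ext hA
  have hn' : n = 1 := by
    simpa [J_squared, vecMul_neg] using congrArg (· ᵥ* J (Fin k) ℤ) hn
  exact SemidirectProduct.ext hn' rfl

theorem mem_range_affineSymplecticRep_iff (k : ℕ) (X : GL ((Fin k ⊕ Fin k) ⊕ Unit) ℤ) :
    X ∈ (affineSymplecticRep k).toHomUnits.range ↔
      (X : Matrix _ _ ℤ) ∈ formStabilizer (degenerateJ (Fin k) ℤ) (Pi.single (Sum.inr ()) 1) := by
  constructor
  · rintro ⟨⟨n, A⟩, rfl⟩
    exact (affineBlock_mem_formStabilizer_iff _ _ _).mpr (SymplecticGroup.mem_iff'.mp A.2)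
  · intro hX
    obtain ⟨S, c, hSc⟩ := (mulVec_single_inr_eq_iff _).mp hX.2
    rw [hSc] at hX
    have hS : S ∈ symplecticGroup (Fin k) ℤ :=
      SymplecticGroup.mem_iff'.mpr ((affineBlock_mem_formStabilizer_iff _ _ _).mp hX)
    refine ⟨⟨Multiplicative.ofAdd (c ᵥ* -(J (Fin k) ℤ * Sᵀ)), ⟨S, hS⟩⟩, Units.ext ?_⟩
    show affineBlock S _ = _
    rw [hSc, toAdd_ofAdd, vecMul_vecMul, SymplecticGroup.neg_J_mul_transpose_mul_J_mul hS,
      vecMul_one]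

theorem mem_map_glFormStab_iff {k : ℕ} {n : Type*} [Fintype n] [DecidableEq n]
    {P : Matrix (Fin k) n ℤ} {Q : Matrix n (Fin k) ℤ} (hPQ : P * Q = 1) (hQP : Q * P = 1)
    {J : Matrix (Fin k) (Fin k) ℤ} {v : Fin k → ℤ} {X : GL n ℤ} :
    X ∈ (glFormStab k J v).map (Units.mapEquiv (conjMulEquiv hPQ hQP)).toMonoidHom ↔
      (X : Matrix n n ℤ) ∈ formStabilizer (Pᵀ * J * P) (Q *ᵥ v) := by
  rw [Subgroup.mem_map_equiv]
  exact mul_mul_mem_formStabilizer_iff hPQ hQP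

theorem primeJ_apply (g : ℕ) (r s : Fin (2 * g - 1)) :
    primeJ g r s = (if (r : ℕ) = s + 1 then 1 else 0) - (if (s : ℕ) = r + 1 then 1 else 0) := by
  simp only [primeJ, of_apply]
  split_ifs <;> omega

/-- The columns are, in coordinates indexed from `0`, the vectors `e₁ + e₃ + ⋯ + e_{2j+1}`, then
`e_{2i+2}`, then `v'`; the rows of `adaptedCoords` are forward differences inverting this. -/
def adaptedBasis (g : ℕ) : Matrix (Fin (2 * g - 1)) ((Fin (g - 1) ⊕ Fin (g - 1)) ⊕ Unit) ℤ :=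
  of fun r p => match p with
    | .inl (.inl j) => if (r : ℕ) % 2 = 1 ∧ (r : ℕ) ≤ 2 * j + 1 then 1 else 0
    | .inl (.inr i) => if (r : ℕ) = 2 * i + 2 then 1 else 0
    | .inr _ => vPrime g r

def adaptedCoords (g : ℕ) : Matrix ((Fin (g - 1) ⊕ Fin (g - 1)) ⊕ Unit) (Fin (2 * g - 1)) ℤ :=
  of fun p r => match p with
    | .inl (.inl j) =>
        (if (r : ℕ) = 2 * j + 1 then 1 else 0) - (if (r : ℕ) = 2 * j + 3 then 1 else 0)
    | .inl (.inr i) => (if (r : ℕ) = 2 * i + 2 then 1 else 0) - (if (r : ℕ) = 0 then 1 else 0)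
    | .inr _ => if (r : ℕ) = 0 then 1 else 0

theorem adaptedCoords_mul_adaptedBasis {g : ℕ} (hg : 1 ≤ g) :
    adaptedCoords g * adaptedBasis g = 1 := by
  ext ((i | i) | _) q <;>
  simp only [mul_apply, adaptedCoords, of_apply, sub_mul, ite_mul, one_mul, zero_mul,
    Finset.sum_sub_distrib, Fin.sum_ite_val_eq] <;>
  rcases q with (j | j) | _ <;>
  simp [adaptedBasis, vPrime, one_apply, Fin.ext_iff] <;>
  (try split_ifs) <;> omega

theorem adaptedBasis_mul_adaptedCoords {g : ℕ} (hg : 1 ≤ g) :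
    adaptedBasis g * adaptedCoords g = 1 :=
  (mul_eq_one_comm_of_card_eq _ _ _ (by simp; omega)).mpr (adaptedCoords_mul_adaptedBasis hg)

theorem primeJ_mul_adaptedBasis (g : ℕ) :
    primeJ g * adaptedBasis g = (adaptedCoords g)ᵀ * degenerateJ (Fin (g - 1)) ℤ := by
  ext r q
  simp only [mul_apply, primeJ_apply, sub_mul, ite_mul, one_mul, zero_mul,
    Finset.sum_sub_distrib, Fin.sum_ite_val_eq, Fin.sum_ite_eq_val_add_one]
  rcases q with (j | j) | _ <;>
  simp [adaptedBasis, adaptedCoords, vPrime, degenerateJ, Fintype.sum_sum_type, J, one_apply] <;>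
  (try split_ifs) <;> omega

theorem transpose_adaptedBasis_mul_primeJ_mul {g : ℕ} (hg : 1 ≤ g) :
    (adaptedBasis g)ᵀ * primeJ g * adaptedBasis g = degenerateJ (Fin (g - 1)) ℤ := by
  rw [Matrix.mul_assoc, primeJ_mul_adaptedBasis, ← Matrix.mul_assoc, ← transpose_mul,
    adaptedCoords_mul_adaptedBasis hg, transpose_one, Matrix.one_mul]

theorem adaptedCoords_mulVec_vPrime {g : ℕ} (hg : 1 ≤ g) :
    adaptedCoords g *ᵥ vPrime g = Pi.single (Sum.inr ()) 1 := by
  have hv : adaptedBasis g *ᵥ Pi.single (Sum.inr ()) 1 = vPrime g := by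
    rw [mulVec_single_one]; rfl
  rw [← hv, mulVec_mulVec, adaptedCoords_mul_adaptedBasis hg, one_mulVec]

/-- `Γ'_{2g−1} ≅ Sp(2g−2, ℤ) ⋉ ℤ^{2g−2}`. -/
theorem gammaPrime_iso_semidirect (g : ℕ) (hg : 1 ≤ g) :
    Nonempty
      ((glFormStab (2 * g - 1) (primeJ g) (vPrime g)) ≃*
        SemidirectProduct (Multiplicative ((Fin (g - 1) ⊕ Fin (g - 1)) → ℤ))
          (Matrix.symplecticGroup (Fin (g - 1)) ℤ) (spMulAutHom (g - 1))) := by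
  let e := Units.mapEquiv
    (conjMulEquiv (adaptedBasis_mul_adaptedCoords hg) (adaptedCoords_mul_adaptedBasis hg))
  have hrange : (glFormStab (2 * g - 1) (primeJ g) (vPrime g)).map e.toMonoidHom =
      (affineSymplecticRep (g - 1)).toHomUnits.range := by
    ext X
    rw [mem_map_glFormStab_iff, transpose_adaptedBasis_mul_primeJ_mul hg,
      adaptedCoords_mulVec_vPrime hg, mem_range_affineSymplecticRep_iff]
  exact ⟨(e.subgroupMap _).trans ((MulEquiv.subgroupCongr hrange).trans
    (MonoidHom.ofInjective (affineSymplecticRep_injective _)).symm)⟩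
end

section
/- Suppose a positive integer ℓ is even and g ∈ GL(n, ℤ) satisfies g ≡ I mod ℓ. If g lies in the image of the pure braid group PB_n = B_n[2] under the integral Burau representation (which equals Γ_{n−1}[2]), then g is the image under ρ of an element of B_n[ℓ]. Consequently, if ρ(B_n[2]) = Γ_{n−1}[2], then ρ(B_n[ℓ]) = Γ_{n−1}[ℓ] for every even ℓ. -/
open Matrix FreeGroup

lemma glMod_dvd_one {n m ℓ : ℕ} (h : m ∣ ℓ) (g : Matrix.GeneralLinearGroup (Fin n) ℤ)
    (hg : glMod n ℓ g = 1) : glMod n m g = 1 := by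
  have h1 : ((g : Matrix (Fin n) (Fin n) ℤ).map (Int.cast : ℤ → ZMod ℓ)) = 1 :=
    congrArg Units.val hg
  apply Units.ext
  show ((g : Matrix (Fin n) (Fin n) ℤ).map (Int.cast : ℤ → ZMod m)) = 1
  have hc : (Int.cast : ℤ → ZMod m) =
      (ZMod.castHom h (ZMod m)) ∘ (Int.cast : ℤ → ZMod ℓ) := by
    funext x; simp
  rw [hc, ← Matrix.map_map, h1]
  exact Matrix.map_one _ (map_zero _) (map_one _)

theorem image_of_even_level {n : ℕ} (ρ : BraidGroup n →* Matrix.GeneralLinearGroup (Fin n) ℤ)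
    (hρ : IsBurau ρ) (ℓ : ℕ) (hℓ : Even ℓ) (hℓ0 : 0 < ℓ) :
    (∀ g : Matrix.GeneralLinearGroup (Fin n) ℤ,
        g ∈ Subgroup.map ρ (braidCong ρ 2) → glMod n ℓ g = 1 →
          g ∈ Subgroup.map ρ (braidCong ρ ℓ)) ∧
    (∀ Γ : Subgroup (Matrix.GeneralLinearGroup (Fin n) ℤ), ρ.range ≤ Γ →
        Subgroup.map ρ (braidCong ρ 2) = Γ ⊓ (glMod n 2).ker →
          Subgroup.map ρ (braidCong ρ ℓ) = Γ ⊓ (glMod n ℓ).ker) := by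
  have key : ∀ g : Matrix.GeneralLinearGroup (Fin n) ℤ,
      g ∈ Subgroup.map ρ (braidCong ρ 2) → glMod n ℓ g = 1 →
        g ∈ Subgroup.map ρ (braidCong ρ ℓ) := by
    rintro g ⟨b, hb, rfl⟩ hg
    exact ⟨b, by simpa [braidCong, MonoidHom.mem_ker] using hg, rfl⟩
  refine ⟨key, fun Γ hΓ h2 => le_antisymm ?_ ?_⟩
  · rintro g ⟨b, hb, rfl⟩
    refine ⟨hΓ ⟨b, rfl⟩, ?_⟩
    simpa [braidCong, MonoidHom.mem_ker] using hb
  · rintro g ⟨hΓg, hker⟩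
    have hker' : glMod n ℓ g = 1 := hker
    have h2g : glMod n 2 g = 1 := glMod_dvd_one hℓ.two_dvd g hker'
    have : g ∈ Subgroup.map ρ (braidCong ρ 2) := h2 ▸ ⟨hΓg, h2g⟩
    exact key g this hker'
end
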